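/- arXiv:2203.12021 — 10 statements merged into one kernel-verified Lean document; each statement's English description precedes it below -/
import Mathlib

section
/- If G is a finite group with a non-normal maximal subgroup M, then |G : G'| ≤ |M : M'|. In particular, every finite top group is nilpotent. -/
/-!
A maximal subgroup `M` that is not normal cannot contain `G'`, so `G' M = G` and
`G / G' ≅ M / (M ∩ G')`, which is a quotient of `M / M'`. Hence in a top group every maximal
subgroup is normal, and a finite group with this property is nilpotent.
-/

def IsTopGroup (G : Type*) [Group G] : Prop :=
  ∀ H : Subgroup G, H ≠ ⊤ →
    Nat.card (Abelianization H) < Nat.card (Abelianization G)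

section

variable {G : Type*} [Group G]

lemma Abelianization.card_eq_index_commutator :
    Nat.card (Abelianization G) = (commutator G).index :=
  rfl

lemma commutator_le_subgroupOf_commutator (H : Subgroup G) :
    commutator H ≤ (commutator G).subgroupOf H := by
  rw [Subgroup.subgroupOf, ← Subgroup.map_le_iff_le_comap, Subgroup.map_subtype_commutator]
  exact Subgroup.commutator_mono le_top le_top

lemma card_abelianization_dvd_of_commutator_sup_eq_top {H : Subgroup G}
    (h : commutator G ⊔ H = ⊤) :
    Nat.card (Abelianization G) ∣ Nat.card (Abelianization H) := by
  have index_eq : (commutator G).index = ((commutator G).subgroupOf H).index := by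
    rw [← Subgroup.relIndex, ← Subgroup.relIndex_sup_left, h, Subgroup.relIndex_top_right]
  rw [Abelianization.card_eq_index_commutator, Abelianization.card_eq_index_commutator,
    index_eq]
  exact Subgroup.index_dvd_of_le (commutator_le_subgroupOf_commutator H)

lemma IsCoatom.commutator_sup_eq_top_of_not_normal {M : Subgroup G} (hM : IsCoatom M)
    (hn : ¬ M.Normal) : commutator G ⊔ M = ⊤ :=
  hM.2 _ <| sup_comm M _ ▸ left_lt_sup.mpr fun h ↦ hn (Subgroup.Normal.of_commutator_le G h)

lemma IsCoatom.card_abelianization_le_of_not_normal [Finite G] {M : Subgroup G}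
    (hM : IsCoatom M) (hn : ¬ M.Normal) :
    Nat.card (Abelianization G) ≤ Nat.card (Abelianization M) :=
  Nat.le_of_dvd Nat.card_pos <|
    card_abelianization_dvd_of_commutator_sup_eq_top
      (hM.commutator_sup_eq_top_of_not_normal hn)

lemma IsTopGroup.isNilpotent [Finite G] (h : IsTopGroup G) : Group.IsNilpotent G := by
  refine (Group.isNilpotent_of_finite_tfae.out 0 2).mpr fun M hM ↦ ?_
  by_contra hn
  exact (h M hM.1).not_ge (hM.card_abelianization_le_of_not_normal hn)

end

/-- If `M` is a non-normal maximal subgroup of a finite group `G`, then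
`|G : G'| ≤ |M : M'|`; in particular every finite top group is nilpotent. -/
theorem top_group_nilpotent (G : Type*) [Group G] [Finite G] :
    (∀ M : Subgroup G, IsCoatom M → ¬ M.Normal →
      Nat.card (Abelianization G) ≤ Nat.card (Abelianization M)) ∧
    (IsTopGroup G → Group.IsNilpotent G) :=
  ⟨fun _ hM hn ↦ hM.card_abelianization_le_of_not_normal hn, IsTopGroup.isNilpotent⟩
end

section
/- Every quotient of a finite weakly-top group is weakly-top. -/
def IsWeaklyTop (G : Type*) [Group G] : Prop :=
  ∀ H : Subgroup G, Nat.card (Abelianization H) ≤ Nat.card (Abelianization G)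

open Subgroup


-- card of image times card of kernel-part equals card of subgroup
lemma aux_card_map {A B : Type*} [Group A] [Group B] [Finite A] (f : A →* B) (H : Subgroup A) :
    Nat.card (H.map f) * Nat.card (f.ker.subgroupOf H) = Nat.card H := by
  have g := f.comp H.subtype
  have hrange : (f.comp H.subtype).range = H.map f := by
    rw [MonoidHom.range_comp, Subgroup.range_subtype]
  have hker : (f.comp H.subtype).ker = f.ker.subgroupOf H := rfl
  have e : H ⧸ (f.comp H.subtype).ker ≃* (f.comp H.subtype).range :=
    QuotientGroup.quotientKerEquivRange _
  have := Subgroup.card_eq_card_quotient_mul_card_subgroup (f.comp H.subtype).ker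
  rw [Nat.card_congr e.toEquiv, hrange, hker] at this
  exact this.symm

lemma aux_key {A B : Type*} [Group A] [Group B] [Finite A] (f : A →* B)
    (hf : Function.Surjective f) :
    Nat.card (Abelianization B) * Nat.card f.ker
      = Nat.card (Abelianization A) * Nat.card (f.ker ⊓ commutator A : Subgroup A) := by
  have : Finite B := Finite.of_surjective f hf
  have c1 : Nat.card A = Nat.card (Abelianization A) * Nat.card (commutator A) :=
    Subgroup.card_eq_card_quotient_mul_card_subgroup (commutator A)
  have c2 : Nat.card B = Nat.card (Abelianization B) * Nat.card (commutator B) :=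
    Subgroup.card_eq_card_quotient_mul_card_subgroup (commutator B)
  have c3 : Nat.card B * Nat.card f.ker = Nat.card A := by
    have := Subgroup.card_eq_card_quotient_mul_card_subgroup f.ker
    rw [Nat.card_congr (QuotientGroup.quotientKerEquivOfSurjective f hf).toEquiv] at this
    exact this.symm
  have c4 : commutator B = (commutator A).map f := by
    rw [commutator_def, commutator_def, Subgroup.map_commutator,
      Subgroup.map_top_of_surjective f hf]
  have c5 : Nat.card ((commutator A).map f) * Nat.card (f.ker.subgroupOf (commutator A))
      = Nat.card (commutator A) := aux_card_map f (commutator A)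
  have c6 : Nat.card (f.ker.subgroupOf (commutator A))
      = Nat.card (f.ker ⊓ commutator A : Subgroup A) := by
    rw [← Subgroup.subgroupOf_map_subtype]
    exact Nat.card_congr ((f.ker.subgroupOf (commutator A)).equivMapOfInjective _
      (commutator A).subtype_injective).toEquiv
  have hy : 0 < Nat.card ((commutator A).map f) := Nat.card_pos
  apply Nat.eq_of_mul_eq_mul_left hy
  calc Nat.card ((commutator A).map f) * (Nat.card (Abelianization B) * Nat.card f.ker)
      = (Nat.card (Abelianization B) * Nat.card ((commutator A).map f)) * Nat.card f.ker := by ring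
    _ = Nat.card B * Nat.card f.ker := by rw [← c4, ← c2]
    _ = Nat.card A := c3
    _ = Nat.card (Abelianization A) * (Nat.card ((commutator A).map f) * Nat.card (f.ker.subgroupOf (commutator A))) := by rw [c5, c1]
    _ = Nat.card ((commutator A).map f) * (Nat.card (Abelianization A) * Nat.card (f.ker ⊓ commutator A : Subgroup A)) := by rw [c6]; ring


theorem quotient_weakly_top' (G : Type*) [Group G] [Finite G]
    (N : Subgroup G) [N.Normal]
    (hG : ∀ H : Subgroup G, Nat.card (Abelianization H) ≤ Nat.card (Abelianization G)) :
    ∀ H : Subgroup (G ⧸ N), Nat.card (Abelianization H) ≤ Nat.card (Abelianization (G ⧸ N)) := by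
  intro H
  set f : G →* G ⧸ N := QuotientGroup.mk' N with hf_def
  have hf : Function.Surjective f := QuotientGroup.mk'_surjective N
  set K : Subgroup G := H.comap f with hK_def
  -- the restricted surjection g : K →* H
  have hmem : ∀ x : K, f (K.subtype x) ∈ H := fun x => x.2
  set g : K →* H := (f.comp K.subtype).codRestrict H hmem with hg_def
  have hgsurj : Function.Surjective g := by
    rintro ⟨b, hb⟩
    obtain ⟨a, rfl⟩ := hf b
    exact ⟨⟨a, hb⟩, rfl⟩
  have hkerg : g.ker = N.subgroupOf K := by
    rw [hg_def, MonoidHom.ker_codRestrict]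
    have : (f.comp K.subtype).ker = f.ker.subgroupOf K := rfl
    rw [this, hf_def, QuotientGroup.ker_mk']
  have hNK : N ≤ K := by
    intro n hn
    show f n ∈ H
    have : f n = 1 := by
      rw [hf_def]
      simpa [QuotientGroup.eq_one_iff] using hn
    rw [this]; exact H.one_mem
  have hcard_ker : Nat.card g.ker = Nat.card N := by
    rw [hkerg]
    exact Nat.card_congr (Subgroup.subgroupOfEquivOfLe hNK).toEquiv
  -- key equalities
  have e1 := aux_key g hgsurj
  have e2 := aux_key f hf
  rw [hf_def, QuotientGroup.ker_mk'] at e2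
  rw [hcard_ker] at e1
  -- inequality of the right sides
  have hle1 : Nat.card (Abelianization K) ≤ Nat.card (Abelianization G) := hG K
  have hle2 : Nat.card (g.ker ⊓ commutator K : Subgroup K)
      ≤ Nat.card (N ⊓ commutator G : Subgroup G) := by
    have hcg : Nat.card (g.ker ⊓ commutator K : Subgroup K)
        = Nat.card ((g.ker ⊓ commutator K : Subgroup K).map K.subtype) :=
      Nat.card_congr ((g.ker ⊓ commutator K).equivMapOfInjective _ K.subtype_injective).toEquiv
    rw [hcg]
    apply Subgroup.card_le_of_le
    refine le_inf ?_ ?_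
    · refine le_trans (Subgroup.map_mono inf_le_left) ?_
      rw [hkerg, Subgroup.subgroupOf_map_subtype]
      exact inf_le_left
    · refine le_trans (Subgroup.map_mono inf_le_right) ?_
      rw [commutator_def, Subgroup.map_commutator, commutator_def]
      exact Subgroup.commutator_mono (by simp) (by simp)
  have hNpos : 0 < Nat.card N := Nat.card_pos
  apply Nat.le_of_mul_le_mul_right _ hNpos
  rw [e1, e2]
  exact Nat.mul_le_mul hle1 hle2

/-- Every quotient of a finite weakly-top group is weakly-top. -/
theorem quotient_weakly_top (G : Type*) [Group G] [Finite G]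
    (N : Subgroup G) [N.Normal] (hG : IsWeaklyTop G) :
    IsWeaklyTop (G ⧸ N) := by
  exact quotient_weakly_top' G N hG
end

section
/- Every quotient of a finite top group is top. -/
/-- Cardinality of the image of a subgroup under the quotient map. -/
lemma card_map_mk'_mul (G : Type*) [Group G] [Finite G] (N : Subgroup G) [N.Normal]
    (C : Subgroup G) :
    Nat.card (C.map (QuotientGroup.mk' N)) * Nat.card (↥(C ⊓ N)) = Nat.card C := by
  set f := (QuotientGroup.mk' N).comp C.subtype with hf
  have hrange : f.range = C.map (QuotientGroup.mk' N) := by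
    rw [hf, MonoidHom.range_comp, Subgroup.range_subtype]
  have hker : f.ker = N.subgroupOf C := by
    rw [hf, ← MonoidHom.comap_ker, QuotientGroup.ker_mk']; rfl
  have h1 : Nat.card C = Nat.card (C ⧸ f.ker) * Nat.card f.ker :=
    Subgroup.card_eq_card_quotient_mul_card_subgroup f.ker
  have h2 : Nat.card (C ⧸ f.ker) = Nat.card f.range :=
    Nat.card_congr (QuotientGroup.quotientKerEquivRange f).toEquiv
  have h3 : Nat.card f.ker = Nat.card (↥(C ⊓ N)) := by
    rw [hker]
    calc Nat.card (N.subgroupOf C)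
        = Nat.card ((N.subgroupOf C).map C.subtype) :=
          Nat.card_congr ((N.subgroupOf C).equivMapOfInjective _ C.subtype_injective).toEquiv
      _ = Nat.card (↥(C ⊓ N)) := by rw [Subgroup.subgroupOf_map_subtype, inf_comm]
  rw [h1, h2, h3, hrange]

lemma commutator_quotient_eq (G : Type*) [Group G] (N : Subgroup G) [N.Normal] :
    commutator (G ⧸ N) = (commutator G).map (QuotientGroup.mk' N) := by
  rw [commutator_def, commutator_def, Subgroup.map_commutator,
    Subgroup.map_top_of_surjective _ (QuotientGroup.mk'_surjective N)]

lemma card_ab_mul_card_commutator (G : Type*) [Group G] [Finite G] :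
    Nat.card (Abelianization G) * Nat.card (commutator G) = Nat.card G :=
  (Subgroup.card_eq_card_quotient_mul_card_subgroup (commutator G)).symm

/-- Key formula: |Ab(G/N)| * |N| = |Ab(G)| * |G' ⊓ N|. -/
lemma key_formula (G : Type*) [Group G] [Finite G] (N : Subgroup G) [N.Normal] :
    Nat.card (Abelianization (G ⧸ N)) * Nat.card N =
      Nat.card (Abelianization G) * Nat.card (↥(commutator G ⊓ N)) := by
  have h0 : 0 < Nat.card (commutator G) := Nat.card_pos
  have h1 := card_ab_mul_card_commutator (G ⧸ N)
  have h2 := card_map_mk'_mul G N (commutator G)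
  have h3 : Nat.card (G ⧸ N) * Nat.card N = Nat.card G :=
    (Subgroup.card_eq_card_quotient_mul_card_subgroup N).symm
  have h4 := card_ab_mul_card_commutator G
  rw [commutator_quotient_eq] at h1
  refine Nat.eq_of_mul_eq_mul_right h0 ?_
  calc Nat.card (Abelianization (G ⧸ N)) * Nat.card N * Nat.card (commutator G)
      = Nat.card (Abelianization (G ⧸ N)) *
          Nat.card ((commutator G).map (QuotientGroup.mk' N)) *
          (Nat.card (↥(commutator G ⊓ N)) * Nat.card N) := by rw [← h2]; ring
    _ = Nat.card (G ⧸ N) * Nat.card N * Nat.card (↥(commutator G ⊓ N)) := by rw [h1]; ring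
    _ = Nat.card G * Nat.card (↥(commutator G ⊓ N)) := by rw [h3]
    _ = Nat.card (Abelianization G) * Nat.card (↥(commutator G ⊓ N)) *
          Nat.card (commutator G) := by rw [← h4]; ring

/-- Every quotient of a finite top group is top. -/
theorem quotient_top (G : Type*) [Group G] [Finite G]
    (N : Subgroup G) [N.Normal] (hG : IsTopGroup G) :
    IsTopGroup (G ⧸ N) := by
  intro H hH
  have hsurj := QuotientGroup.mk'_surjective N
  set K := H.comap (QuotientGroup.mk' N) with hKdef
  have hmap : K.map (QuotientGroup.mk' N) = H :=
    Subgroup.map_comap_eq_self_of_surjective hsurj H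
  have hKne : K ≠ ⊤ := by
    intro h
    apply hH
    rw [← hmap, h, Subgroup.map_top_of_surjective _ hsurj]
  have hNK : N ≤ K := by
    intro n hn
    simp only [hKdef, Subgroup.mem_comap, QuotientGroup.mk'_apply]
    rw [(QuotientGroup.eq_one_iff n).mpr hn]
    exact H.one_mem
  -- H is isomorphic to K ⧸ N.subgroupOf K
  set f := (QuotientGroup.mk' N).comp K.subtype with hf
  have hrange : f.range = H := by
    rw [hf, MonoidHom.range_comp, Subgroup.range_subtype, hmap]
  have hker : f.ker = N.subgroupOf K := by
    rw [hf, ← MonoidHom.comap_ker, QuotientGroup.ker_mk']; rfl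
  have e : (↥K ⧸ N.subgroupOf K) ≃* ↥H :=
    (QuotientGroup.quotientMulEquivOfEq hker.symm).trans
      ((QuotientGroup.quotientKerEquivRange f).trans (MulEquiv.subgroupCongr hrange))
  have hcardH : Nat.card (Abelianization ↥H) =
      Nat.card (Abelianization (↥K ⧸ N.subgroupOf K)) :=
    (Nat.card_congr e.abelianizationCongr.toEquiv).symm
  have hkey := key_formula ↥K (N.subgroupOf K)
  have hcardN : Nat.card (N.subgroupOf K) = Nat.card N :=
    Nat.card_congr (Subgroup.subgroupOfEquivOfLe hNK).toEquiv
  have hpq : Nat.card (↥(commutator ↥K ⊓ N.subgroupOf K)) ≤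
      Nat.card (↥(commutator G ⊓ N)) := by
    have hle : (commutator ↥K ⊓ N.subgroupOf K).map K.subtype ≤ commutator G ⊓ N := by
      refine le_inf ?_ ?_
      · refine le_trans (Subgroup.map_mono inf_le_left) ?_
        rw [commutator_def, commutator_def, Subgroup.map_commutator]
        exact Subgroup.commutator_mono le_top le_top
      · refine le_trans (Subgroup.map_mono inf_le_right) ?_
        rw [Subgroup.subgroupOf_map_subtype]
        exact inf_le_left
    calc Nat.card (↥(commutator ↥K ⊓ N.subgroupOf K))
        = Nat.card ((commutator ↥K ⊓ N.subgroupOf K).map K.subtype) :=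
          Nat.card_congr
            ((commutator ↥K ⊓ N.subgroupOf K).equivMapOfInjective _
              K.subtype_injective).toEquiv
      _ ≤ Nat.card (↥(commutator G ⊓ N)) := Subgroup.card_le_of_le hle
  have hkeyG := key_formula G N
  have habK : Nat.card (Abelianization ↥K) < Nat.card (Abelianization G) := hG K hKne
  have hppos : 0 < Nat.card (↥(commutator ↥K ⊓ N.subgroupOf K)) := Nat.card_pos
  rw [hcardN] at hkey
  rw [hcardH]
  have hmain : Nat.card (Abelianization (↥K ⧸ N.subgroupOf K)) * Nat.card N <
      Nat.card (Abelianization (G ⧸ N)) * Nat.card N := by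
    rw [hkey, hkeyG]
    calc Nat.card (Abelianization ↥K) * Nat.card (↥(commutator ↥K ⊓ N.subgroupOf K))
        < Nat.card (Abelianization G) * Nat.card (↥(commutator ↥K ⊓ N.subgroupOf K)) :=
          (Nat.mul_lt_mul_right hppos).mpr habK
      _ ≤ Nat.card (Abelianization G) * Nat.card (↥(commutator G ⊓ N)) :=
          Nat.mul_le_mul_left _ hpq
  exact Nat.lt_of_mul_lt_mul_right hmain
end

section
/- Let G be a finite weakly-top group, N ⊴ G, and H a subgroup with N ≤ H < G. Then |H : H'N| ≤ |G : G'N|. -/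
private lemma cardRel {G : Type*} [Group G] (J B : Subgroup G) (h : J ≤ B) :
    J.relIndex B * Nat.card J = Nat.card B := by
  have hc : Nat.card (J.subgroupOf B) = Nat.card J :=
    Nat.card_congr (Subgroup.subgroupOfEquivOfLe h).toEquiv
  rw [Subgroup.relIndex, ← hc]
  exact Subgroup.index_mul_card (J.subgroupOf B)

private lemma card_sup_mul_card_inf {G : Type*} [Group G] (A N : Subgroup G) [N.Normal] :
    Nat.card (A ⊔ N : Subgroup G) * Nat.card (N ⊓ A : Subgroup G)
      = Nat.card A * Nat.card N := by
  have e1 : N.relIndex (A ⊔ N) * Nat.card N = Nat.card (A ⊔ N : Subgroup G) :=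
    cardRel N (A ⊔ N) le_sup_right
  have e2 : (N ⊓ A).relIndex A * Nat.card (N ⊓ A : Subgroup G) = Nat.card A :=
    cardRel (N ⊓ A) A inf_le_right
  have e3 : N.relIndex (A ⊔ N) = (N ⊓ A).relIndex A := by
    rw [Subgroup.relIndex_sup_right, Subgroup.inf_relIndex_right]
  rw [← e1, ← e2, e3]
  ring

/-- If `G` is a finite weakly-top group, `N ⊴ G` and `N ≤ H < G`,
then `|H : H'N| ≤ |G : G'N|`. -/
theorem relindex_le_of_weakly_top (G : Type*) [Group G] [Finite G]
    (hG : IsWeaklyTop G) (N H : Subgroup G) [N.Normal]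
    (hNH : N ≤ H) (hH : H ≠ ⊤) :
    (((commutator H).map H.subtype ⊔ N).relIndex H) ≤
      (commutator G ⊔ N).index := by
  set H' : Subgroup G := (commutator H).map H.subtype with hH'
  set K : Subgroup G := H' ⊔ N with hK
  set L : Subgroup G := commutator G ⊔ N with hL
  have hH'H : H' ≤ H := Subgroup.map_subtype_le _
  have hKH : K ≤ H := sup_le hH'H hNH
  have hH'G' : H' ≤ commutator G := by
    rw [hH', commutator_def, Subgroup.map_commutator]
    exact Subgroup.commutator_mono le_top le_top
  -- the weakly-top inequality, as indices of commutators
  have wk : (commutator H).index ≤ (commutator G).index := hG H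
  -- card of the mapped commutator
  have hcardH' : Nat.card H' = Nat.card (commutator H) :=
    (Nat.card_congr ((commutator H).equivMapOfInjective H.subtype
      H.subtype_injective).toEquiv).symm
  have eH : Nat.card H' * (commutator H).index = Nat.card H := by
    rw [hcardH']; exact Subgroup.card_mul_index (commutator H)
  have eG : Nat.card (commutator G) * (commutator G).index = Nat.card G :=
    Subgroup.card_mul_index (commutator G)
  have A : K.relIndex H * Nat.card K = Nat.card H := cardRel K H hKH
  have B : Nat.card K * Nat.card (N ⊓ H' : Subgroup G)
      = Nat.card H' * Nat.card N := card_sup_mul_card_inf H' N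
  have C : L.index * Nat.card L = Nat.card G := Subgroup.index_mul_card L
  have D : Nat.card L * Nat.card (N ⊓ commutator G : Subgroup G)
      = Nat.card (commutator G) * Nat.card N := card_sup_mul_card_inf (commutator G) N
  have posH' : 0 < Nat.card H' := Nat.card_pos
  have posG' : 0 < Nat.card (commutator G) := Nat.card_pos
  have posN : 0 < Nat.card N := Nat.card_pos
  have key1 : K.relIndex H * Nat.card N
      = (commutator H).index * Nat.card (N ⊓ H' : Subgroup G) := by
    have : Nat.card H' * (K.relIndex H * Nat.card N)
        = Nat.card H' * ((commutator H).index * Nat.card (N ⊓ H' : Subgroup G)) := by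
      calc Nat.card H' * (K.relIndex H * Nat.card N)
          = K.relIndex H * (Nat.card H' * Nat.card N) := by ring
        _ = K.relIndex H * (Nat.card K * Nat.card (N ⊓ H' : Subgroup G)) := by rw [B]
        _ = (K.relIndex H * Nat.card K) * Nat.card (N ⊓ H' : Subgroup G) := by ring
        _ = Nat.card H * Nat.card (N ⊓ H' : Subgroup G) := by rw [A]
        _ = (Nat.card H' * (commutator H).index) * Nat.card (N ⊓ H' : Subgroup G) := by
            rw [eH]
        _ = Nat.card H' * ((commutator H).index * Nat.card (N ⊓ H' : Subgroup G)) := by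
            ring
    exact Nat.eq_of_mul_eq_mul_left posH' this
  have key2 : L.index * Nat.card N
      = (commutator G).index * Nat.card (N ⊓ commutator G : Subgroup G) := by
    have : Nat.card (commutator G) * (L.index * Nat.card N)
        = Nat.card (commutator G)
          * ((commutator G).index * Nat.card (N ⊓ commutator G : Subgroup G)) := by
      calc Nat.card (commutator G) * (L.index * Nat.card N)
          = L.index * (Nat.card (commutator G) * Nat.card N) := by ring
        _ = L.index * (Nat.card L * Nat.card (N ⊓ commutator G : Subgroup G)) := by rw [D]
        _ = (L.index * Nat.card L) * Nat.card (N ⊓ commutator G : Subgroup G) := by ring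
        _ = Nat.card G * Nat.card (N ⊓ commutator G : Subgroup G) := by rw [C]
        _ = (Nat.card (commutator G) * (commutator G).index)
              * Nat.card (N ⊓ commutator G : Subgroup G) := by rw [eG]
        _ = Nat.card (commutator G)
              * ((commutator G).index * Nat.card (N ⊓ commutator G : Subgroup G)) := by ring
    exact Nat.eq_of_mul_eq_mul_left posG' this
  have hmono : Nat.card (N ⊓ H' : Subgroup G) ≤ Nat.card (N ⊓ commutator G : Subgroup G) :=
    Subgroup.card_le_of_le (inf_le_inf_left N hH'G')
  have : K.relIndex H * Nat.card N ≤ L.index * Nat.card N := by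
    rw [key1, key2]
    exact Nat.mul_le_mul wk hmono
  exact Nat.le_of_mul_le_mul_right this posN
end

section
/- A finite direct product A × B is weakly-top if and only if both A and B are weakly-top. -/
private lemma of_surj (G : Type*) [Group G] :
    Function.Surjective (Abelianization.of : G → Abelianization G) :=
  QuotientGroup.mk_surjective

private lemma card_abelianization_prod (G K : Type*) [Group G] [Group K] :
    Nat.card (Abelianization (G × K)) =
      Nat.card (Abelianization G) * Nat.card (Abelianization K) := by
  rw [← Nat.card_prod]
  set L : Abelianization (G × K) →* Abelianization G × Abelianization K :=
    Abelianization.lift ((Abelianization.of.comp (MonoidHom.fst G K)).prod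
      (Abelianization.of.comp (MonoidHom.snd G K))) with hL
  set R : Abelianization G × Abelianization K →* Abelianization (G × K) :=
    (Abelianization.map (MonoidHom.inl G K)).coprod (Abelianization.map (MonoidHom.inr G K))
    with hR
  have h1 : ∀ y : Abelianization G, L (Abelianization.map (MonoidHom.inl G K) y) = (y, 1) := by
    intro y; obtain ⟨g, rfl⟩ := of_surj G y
    simp [hL, Abelianization.map_of]
  have h2 : ∀ z : Abelianization K, L (Abelianization.map (MonoidHom.inr G K) z) = (1, z) := by
    intro z; obtain ⟨k, rfl⟩ := of_surj K z
    simp [hL, Abelianization.map_of]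
  refine Nat.card_congr (MulEquiv.toEquiv (MonoidHom.toMulEquiv L R ?_ ?_))
  · ext ⟨g, k⟩
    have : ((g, k) : G × K) = (g, 1) * (1, k) := by simp
    simp only [MonoidHom.comp_apply, MonoidHom.id_apply, this, map_mul]
    simp [hL, hR, Abelianization.map_of]
  · ext ⟨y, z⟩
    all_goals simp [hR, h1, h2]

/-- A finite direct product is weakly-top iff both factors are weakly-top. -/
theorem prod_weakly_top_iff (A B : Type*) [Group A] [Group B]
    [Finite A] [Finite B] :
    IsWeaklyTop (A × B) ↔ IsWeaklyTop A ∧ IsWeaklyTop B := by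
  have finAbA : Finite (Abelianization A) := Finite.of_surjective _ (of_surj A)
  have finAbB : Finite (Abelianization B) := Finite.of_surjective _ (of_surj B)
  constructor
  · intro h
    constructor
    · intro H
      have key := h (H.prod ⊤)
      have e : Abelianization ↥(H.prod (⊤ : Subgroup B)) ≃* Abelianization (↥H × B) :=
        MulEquiv.abelianizationCongr ((Subgroup.prodEquiv H ⊤).trans
          ((MulEquiv.refl H).prodCongr Subgroup.topEquiv))
      rw [Nat.card_congr e.toEquiv, card_abelianization_prod, card_abelianization_prod] at key
      exact Nat.le_of_mul_le_mul_right key Nat.card_pos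
    · intro H
      have key := h ((⊤ : Subgroup A).prod H)
      have e : Abelianization ↥((⊤ : Subgroup A).prod H) ≃* Abelianization (A × ↥H) :=
        MulEquiv.abelianizationCongr ((Subgroup.prodEquiv ⊤ H).trans
          (Subgroup.topEquiv.prodCongr (MulEquiv.refl H)))
      rw [Nat.card_congr e.toEquiv, card_abelianization_prod, card_abelianization_prod] at key
      exact Nat.le_of_mul_le_mul_left key Nat.card_pos
  · rintro ⟨hA, hB⟩ H
    set H₁ : Subgroup A := H.map (MonoidHom.fst A B) with hH₁
    set π : H →* H₁ := (MonoidHom.fst A B).subgroupMap H with hπdef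
    have hπ : Function.Surjective π := (MonoidHom.fst A B).subgroupMap_surjective H
    set f : Abelianization ↥H →* Abelianization ↥H₁ := Abelianization.map π with hfdef
    have hf : Function.Surjective f := by
      intro y
      obtain ⟨h₁, rfl⟩ := of_surj _ y
      obtain ⟨h, rfl⟩ := hπ h₁
      exact ⟨Abelianization.of h, Abelianization.map_of π h⟩
    -- the kernel of f is the image of ker π in the abelianization
    have hker : f.ker = (π.ker).map Abelianization.of := by
      ext x
      constructor
      · intro hx
        obtain ⟨h, rfl⟩ := of_surj _ x
        rw [MonoidHom.mem_ker, hfdef, Abelianization.map_of] at hx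
        have hmem : π h ∈ commutator ↥H₁ := (QuotientGroup.eq_one_iff (π h)).mp hx
        have hc : commutator ↥H₁ = (commutator ↥H).map π := by
          have htop : Subgroup.map π ⊤ = ⊤ := by
            rw [← MonoidHom.range_eq_map, MonoidHom.range_eq_top]
            exact hπ
          rw [commutator_def, commutator_def, Subgroup.map_commutator, htop]
        rw [hc] at hmem
        obtain ⟨c, hc1, hc2⟩ := hmem
        refine Subgroup.mem_map.mpr ⟨h * c⁻¹, ?_, ?_⟩
        · rw [MonoidHom.mem_ker, map_mul, map_inv, hc2, mul_inv_cancel]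
        · have hc0 : Abelianization.of c = 1 := (QuotientGroup.eq_one_iff c).mpr hc1
          rw [map_mul, map_inv, hc0, inv_one, mul_one]
      · rintro ⟨n, hn, rfl⟩
        rw [MonoidHom.mem_ker, hfdef, Abelianization.map_of, MonoidHom.mem_ker.mp hn, map_one]
    -- counting : |Ab H| = |Ab H₁| * |ker f|
    have c1 : Nat.card (Abelianization ↥H)
        = Nat.card (Abelianization ↥H₁) * Nat.card f.ker := by
      rw [Subgroup.card_eq_card_quotient_mul_card_subgroup f.ker]
      congr 1
      exact Nat.card_congr (QuotientGroup.quotientKerEquivOfSurjective f hf).toEquiv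
    -- the kernel of f is an image of the abelianization of ker π
    set j : Abelianization ↥π.ker →* Abelianization ↥H := Abelianization.map π.ker.subtype
      with hjdef
    have hrange : j.range = (π.ker).map Abelianization.of := by
      ext x
      constructor
      · rintro ⟨y, rfl⟩
        obtain ⟨n, rfl⟩ := of_surj _ y
        rw [hjdef, Abelianization.map_of]
        exact ⟨(n : ↥H), n.2, rfl⟩
      · rintro ⟨n, hn, rfl⟩
        exact ⟨Abelianization.of ⟨n, hn⟩, by rw [hjdef, Abelianization.map_of]; rfl⟩
    have finj : Finite (Abelianization ↥π.ker) := Finite.of_surjective _ (of_surj _)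
    have c2 : Nat.card f.ker ≤ Nat.card (Abelianization ↥π.ker) := by
      rw [hker, ← hrange]
      exact Nat.card_le_card_of_surjective j.rangeRestrict j.rangeRestrict_surjective
    -- ker π is isomorphic to a subgroup of B
    set g : ↥π.ker →* B := (MonoidHom.snd A B).comp (H.subtype.comp π.ker.subtype) with hgdef
    have hg : Function.Injective g := by
      intro m n hmn
      have h1 : ∀ k : ↥π.ker, ((k : ↥H) : A × B).1 = 1 := by
        intro k
        have := MonoidHom.mem_ker.mp k.2
        have : ((π (k : ↥H) : ↥H₁) : A) = ((1 : ↥H₁) : A) := by rw [this]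
        exact this
      have h2 : ((m : ↥H) : A × B) = ((n : ↥H) : A × B) := by
        ext
        · rw [h1 m, h1 n]
        · exact hmn
      exact Subtype.ext (Subtype.ext h2)
    have c3 : Nat.card (Abelianization ↥π.ker) ≤ Nat.card (Abelianization B) := by
      have e := MulEquiv.abelianizationCongr (MonoidHom.ofInjective hg)
      rw [Nat.card_congr e.toEquiv]
      exact hB g.range
    calc Nat.card (Abelianization ↥H)
        = Nat.card (Abelianization ↥H₁) * Nat.card f.ker := c1
      _ ≤ Nat.card (Abelianization A) * Nat.card (Abelianization B) :=
          Nat.mul_le_mul (hA H₁) (c2.trans c3)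
      _ = Nat.card (Abelianization (A × B)) := (card_abelianization_prod A B).symm
end

section
/- A finite direct product A × B is top if and only if both A and B are top. -/
open Function

namespace Abelianization

variable {G P K : Type*} [Group G] [Group P] [Group K]

theorem of_surjective : Surjective (of : G →* Abelianization G) :=
  QuotientGroup.mk_surjective

theorem map_surjective {f : G →* P} (hf : Surjective f) : Surjective (map f) := by
  intro x
  obtain ⟨p, rfl⟩ := of_surjective x
  obtain ⟨g, rfl⟩ := hf p
  exact ⟨of g, map_of f g⟩

theorem ker_map_le_range_map {f : G →* P} (hf : Surjective f) {g : K →* G}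
    (hfg : f.ker ≤ g.range) : (map f).ker ≤ (map g).range := by
  intro x hx
  obtain ⟨y, rfl⟩ := of_surjective x
  have hy : f y ∈ (commutator G).map f := by
    rw [commutator, Subgroup.map_commutator, Subgroup.map_top_of_surjective f hf, ← commutator,
      ← ker_of, MonoidHom.mem_ker, ← map_of]
    exact hx
  obtain ⟨c, hc, hfc⟩ := hy
  obtain ⟨k, hk⟩ := hfg (show c⁻¹ * y ∈ f.ker by simp [hfc])
  have hc : of c = 1 := (ker_of (G := G)).ge hc
  exact ⟨of k, by rw [map_of, hk, map_mul, map_inv, hc, inv_one, one_mul]⟩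

theorem card_le_mul_card_of_ker_le_range [Finite (Abelianization K)] {f : G →* P}
    (hf : Surjective f) {g : K →* G} (hfg : f.ker ≤ g.range) :
    Nat.card (Abelianization G) ≤ Nat.card (Abelianization P) * Nat.card (Abelianization K) := by
  have : Finite (map g).range := Finite.of_surjective _ (map g).rangeRestrict_surjective
  calc Nat.card (Abelianization G)
      = Nat.card (Abelianization P) * Nat.card (map f).ker := by
        rw [Subgroup.card_eq_card_quotient_mul_card_subgroup (map f).ker,
          Nat.card_congr (QuotientGroup.quotientKerEquivOfSurjective _ (map_surjective hf)).toEquiv]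
    _ ≤ Nat.card (Abelianization P) * Nat.card (map g).range :=
        Nat.mul_le_mul_left _ (Subgroup.card_le_of_le (ker_map_le_range_map hf hfg))
    _ ≤ Nat.card (Abelianization P) * Nat.card (Abelianization K) :=
        Nat.mul_le_mul_left _ (Nat.card_le_card_of_surjective _ (map g).rangeRestrict_surjective)

variable (G P) in
def prodEquiv : Abelianization (G × P) ≃* Abelianization G × Abelianization P :=
  MonoidHom.toMulEquiv ((map (MonoidHom.fst G P)).prod (map (MonoidHom.snd G P)))
    ((map (MonoidHom.inl G P)).coprod (map (MonoidHom.inr G P)))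
    (by
      ext ⟨a, b⟩
      simp [map_of, ← map_mul])
    (MonoidHom.ext fun ⟨x, y⟩ ↦ by
      obtain ⟨a, rfl⟩ := of_surjective x
      obtain ⟨b, rfl⟩ := of_surjective y
      simp [map_of])

theorem card_prod :
    Nat.card (Abelianization (G × P)) = Nat.card (Abelianization G) * Nat.card (Abelianization P) := by
  rw [Nat.card_congr (prodEquiv G P).toEquiv, Nat.card_prod]

end Abelianization

namespace Subgroup

variable {G A B : Type*} [Group G] [Group A] [Group B]

theorem card_abelianization_top :
    Nat.card (Abelianization (⊤ : Subgroup G)) = Nat.card (Abelianization G) :=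
  Nat.card_congr topEquiv.abelianizationCongr.toEquiv

theorem card_abelianization_prod (H : Subgroup A) (K : Subgroup B) :
    Nat.card (Abelianization (H.prod K)) =
      Nat.card (Abelianization H) * Nat.card (Abelianization K) := by
  rw [Nat.card_congr (prodEquiv H K).abelianizationCongr.toEquiv, Abelianization.card_prod]

theorem eq_top_of_map_fst_eq_top_of_comap_inr_eq_top {H : Subgroup (A × B)}
    (hfst : H.map (MonoidHom.fst A B) = ⊤) (hinr : H.comap (MonoidHom.inr A B) = ⊤) : H = ⊤ := by
  refine eq_top_iff.2 fun ⟨a, b⟩ _ ↦ ?_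
  obtain ⟨⟨a', b'⟩, hH, rfl⟩ := hfst.ge (mem_top a)
  have h1 : ((1 : A), b'⁻¹ * b) ∈ H := hinr.ge (mem_top _)
  simpa using H.mul_mem hH h1

theorem card_abelianization_le_mul [Finite B] (H : Subgroup (A × B)) :
    Nat.card (Abelianization H) ≤ Nat.card (Abelianization (H.map (MonoidHom.fst A B))) *
      Nat.card (Abelianization (H.comap (MonoidHom.inr A B))) := by
  refine Abelianization.card_le_mul_card_of_ker_le_range
    ((MonoidHom.fst A B).subgroupMap_surjective H) (g := (MonoidHom.inr A B).subgroupComap H) ?_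
  intro ⟨⟨a, b⟩, hab⟩ hker
  have ha : a = 1 := congrArg Subtype.val hker
  subst ha
  exact ⟨⟨b, hab⟩, rfl⟩

end Subgroup

namespace IsTopGroup

variable {G A B : Type*} [Group G] [Group A] [Group B]

theorem card_abelianization_le (hG : IsTopGroup G) (H : Subgroup G) :
    Nat.card (Abelianization H) ≤ Nat.card (Abelianization G) := by
  obtain rfl | hH := eq_or_ne H ⊤
  · exact Subgroup.card_abelianization_top.le
  · exact (hG H hH).le

theorem prod [Finite A] [Finite B] (hA : IsTopGroup A) (hB : IsTopGroup B) :
    IsTopGroup (A × B) := by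
  intro H hH
  rw [Abelianization.card_prod]
  refine (Subgroup.card_abelianization_le_mul H).trans_lt ?_
  by_cases hfst : H.map (MonoidHom.fst A B) = ⊤
  · have hinr : H.comap (MonoidHom.inr A B) ≠ ⊤ := fun hinr ↦
      hH (Subgroup.eq_top_of_map_fst_eq_top_of_comap_inr_eq_top hfst hinr)
    exact Nat.mul_lt_mul_of_le_of_lt (hA.card_abelianization_le _) (hB _ hinr) Nat.card_pos
  · exact Nat.mul_lt_mul_of_lt_of_le (hA _ hfst) (hB.card_abelianization_le _) Nat.card_pos

theorem of_prod_left (h : IsTopGroup (A × B)) : IsTopGroup A := by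
  intro H hH
  have hlt := h (H.prod ⊤) fun htop ↦
    hH (eq_top_iff.2 fun a _ ↦ (htop.ge (Subgroup.mem_top (a, 1))).1)
  rw [Subgroup.card_abelianization_prod, Subgroup.card_abelianization_top,
    Abelianization.card_prod] at hlt
  exact Nat.lt_of_mul_lt_mul_right hlt

theorem of_prod_right (h : IsTopGroup (A × B)) : IsTopGroup B := by
  intro H hH
  have hlt := h ((⊤ : Subgroup A).prod H) fun htop ↦
    hH (eq_top_iff.2 fun b _ ↦ (htop.ge (Subgroup.mem_top (1, b))).2)
  rw [Subgroup.card_abelianization_prod, Subgroup.card_abelianization_top,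
    Abelianization.card_prod] at hlt
  exact Nat.lt_of_mul_lt_mul_left hlt

end IsTopGroup

/-- A finite direct product is top iff both factors are top. -/
theorem prod_top_iff (A B : Type*) [Group A] [Group B]
    [Finite A] [Finite B] :
    IsTopGroup (A × B) ↔ IsTopGroup A ∧ IsTopGroup B :=
  ⟨fun h ↦ ⟨h.of_prod_left, h.of_prod_right⟩, fun ⟨hA, hB⟩ ↦ hA.prod hB⟩
end

section
/- Let p be an odd prime, n ≥ 2, N the cyclic group of order p^n, and σ the automorphism of N given by x ↦ x^{p+1}, generating the Sylow p-subgroup K ≅ Z/p^{n-1} of Aut(N). Let G = N ⋊ K. Then |G : G'| = p^n and |γ_i(G) : γ_{i+1}(G)| = p for every i = 2, ..., n; in particular G has nilpotency class exactly n. -/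
/-!
Write `G = N ⋊ ⟨σ⟩` additively in `N = ℤ/pⁿ`, with `σ x = (1 + p) x`. For `a ∈ N` the commutator
`⁅a, g⁆` is `a - g • a`, and every element of `K` acts by a unit `≡ 1 (mod p)`; hence
`⁅pʲN, G⁆ ⊆ pʲ⁺¹N`, with equality because `⁅a, σ⁆ = -p a`. As `K` is abelian and acts trivially on
`N / pN`, also `G' ⊆ pN`, so `γₖ₊₁(G) = pᵏN` has order `pⁿ⁻ᵏ`. Since `1 + p` has order `pⁿ⁻¹`,
`|G| = p²ⁿ⁻¹`, and all the indices follow.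
-/

/-- The natural map from additive automorphisms of `M` to multiplicative
automorphisms of `Multiplicative M`. -/
def addAutToMulAut (M : Type*) [AddGroup M] :
    Multiplicative (AddAut M) →* MulAut (Multiplicative M) where
  toFun f := AddEquiv.toMultiplicative f.toAdd
  map_one' := rfl
  map_mul' _ _ := rfl

open scoped commutatorElement

namespace SemidirectProduct

variable {N G : Type*} [CommGroup N] [Group G] {φ : G →* MulAut N}

theorem commutatorElement_inl (a : N) (g : N ⋊[φ] G) :
    ⁅(inl a : N ⋊[φ] G), g⁆ = inl (a / φ g.right a) := by
  ext
  · simp only [commutatorElement_def, mul_left, left_inl, right_inl, map_one, MulAut.one_apply,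
      mul_right, one_mul, inv_left, inv_one, map_inv, inv_right, mul_one, MulAut.inv_apply,
      MulEquiv.apply_symm_apply, div_eq_mul_inv, map_mul]
    rw [mul_right_comm _ g.left, mul_inv_cancel_right]
  · simp [commutatorElement_def, div_eq_mul_inv]

end SemidirectProduct

section
variable {G H : Type*} [Group G] [Group H]

theorem MulEquiv.card_top_lowerCentralSeries (e : G ≃* H) (i : ℕ) :
    Nat.card ((⊤ : Subgroup G).lowerCentralSeries i) =
      Nat.card ((⊤ : Subgroup H).lowerCentralSeries i) := by
  rw [← Subgroup.card_map_of_injective (f := e.toMonoidHom) e.injective,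
    Subgroup.map_lowerCentralSeries, Subgroup.map_top_of_surjective _ e.surjective]

theorem Subgroup.card_mul_relIndex {H K : Subgroup G} (h : H ≤ K) :
    Nat.card H * H.relIndex K = Nat.card K := by
  rw [← relIndex_bot_left, ← relIndex_bot_left, relIndex_mul_relIndex ⊥ H K bot_le h]

end

abbrev SemidirectAddAut (R : Type*) [AddCommGroup R] (K : Subgroup (Multiplicative (AddAut R))) :=
  SemidirectProduct (Multiplicative R) K ((addAutToMulAut R).comp K.subtype)

namespace SemidirectAddAut

open SemidirectProduct Subgroup

variable {R : Type*} [CommRing R] {K : Subgroup (Multiplicative (AddAut R))}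

variable (K) in
def inlIdeal (I : Ideal R) : Subgroup (SemidirectAddAut R K) :=
  I.toAddSubgroup.toSubgroup.map inl

theorem mem_inlIdeal {I : Ideal R} {s : SemidirectAddAut R K} :
    s ∈ inlIdeal K I ↔ ∃ a ∈ I, inl (.ofAdd a) = s :=
  Iff.rfl

theorem inl_mem_inlIdeal {I : Ideal R} {a : Multiplicative R} :
    (inl a : SemidirectAddAut R K) ∈ inlIdeal K I ↔ a.toAdd ∈ I :=
  mem_map_iff_mem inl_injective

theorem commutatorElement_inl (a : R) (s : SemidirectAddAut R K) :
    ⁅(inl (.ofAdd a) : SemidirectAddAut R K), s⁆ =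
      inl (.ofAdd (a - (s.right : Multiplicative (AddAut R)).toAdd a)) :=
  SemidirectProduct.commutatorElement_inl _ _

variable {π : R} {u : Rˣ}

theorem exists_apply_eq_add_mul (hu : (u : R) = π + 1) (κ : zpowers (AddAut.mulLeft u)) :
    ∃ v : R, ∀ x, (κ : Multiplicative (AddAut R)).toAdd x = x + v * π * x := by
  obtain ⟨m, hm⟩ := mem_zpowers_iff.1 κ.2
  let red : Rˣ →* (R ⧸ Ideal.span {π})ˣ := Units.map (Ideal.Quotient.mk _).toMonoidHom
  have hred : red u = 1 := Units.ext <| by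
    simp [red, hu, Ideal.Quotient.eq_zero_iff_mem.2 (Ideal.mem_span_singleton_self π)]
  have hum : ((u ^ m : Rˣ) : R) - 1 ∈ Ideal.span {π} := by
    rw [← Ideal.Quotient.eq, map_one]
    exact congrArg Units.val (show red (u ^ m) = 1 by rw [map_zpow, hred, one_zpow])
  obtain ⟨v, hv⟩ := Ideal.mem_span_singleton'.1 hum
  refine ⟨v, fun x => ?_⟩
  rw [← hm, ← map_zpow]
  change ((u ^ m : Rˣ) : R) * x = _
  linear_combination (-x) * hv

theorem commutator_inlIdeal_span_pow_top (hu : (u : R) = π + 1) (j : ℕ) :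
    ⁅inlIdeal (zpowers (AddAut.mulLeft u)) (Ideal.span {π ^ j}), ⊤⁆ =
      inlIdeal (zpowers (AddAut.mulLeft u)) (Ideal.span {π ^ (j + 1)}) := by
  apply le_antisymm
  · rw [commutator_le]
    rintro _ hb s -
    obtain ⟨a, ha, rfl⟩ := mem_inlIdeal.1 hb
    obtain ⟨c, rfl⟩ := Ideal.mem_span_singleton'.1 ha
    obtain ⟨v, hv⟩ := exists_apply_eq_add_mul hu s.right
    rw [commutatorElement_inl, inl_mem_inlIdeal, toAdd_ofAdd, hv]
    exact Ideal.mem_span_singleton'.2 ⟨-(v * c), by ring⟩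
  · intro _ hb
    obtain ⟨a, ha, rfl⟩ := mem_inlIdeal.1 hb
    obtain ⟨c, rfl⟩ := Ideal.mem_span_singleton'.1 ha
    let σ : SemidirectAddAut R (zpowers (AddAut.mulLeft u)) := inr ⟨_, mem_zpowers _⟩
    let x : SemidirectAddAut R (zpowers (AddAut.mulLeft u)) := inl (.ofAdd (-(c * π ^ j)))
    have hb' : inl (.ofAdd (c * π ^ (j + 1))) = ⁅x, σ⁆ := by
      rw [commutatorElement_inl]
      congr 1
      change c * π ^ (j + 1) = -(c * π ^ j) - u * -(c * π ^ j)
      rw [hu]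
      ring
    rw [hb']
    exact commutator_mem_commutator
      (inl_mem_inlIdeal.2 (Ideal.mem_span_singleton'.2 ⟨-c, by simp⟩)) (mem_top _)

open scoped IsMulCommutative in
theorem commutator_le_inlIdeal_span (hu : (u : R) = π + 1) :
    commutator (SemidirectAddAut R (zpowers (AddAut.mulLeft u))) ≤
      inlIdeal (zpowers (AddAut.mulLeft u)) (Ideal.span {π}) := by
  let red : Multiplicative R →* Multiplicative (R ⧸ Ideal.span {π}) :=
    (Ideal.Quotient.mk _).toAddMonoidHom.toMultiplicative
  have hred (κ : zpowers (AddAut.mulLeft u)) :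
      red.comp (((addAutToMulAut R).comp (zpowers _).subtype) κ).toMonoidHom = red := by
    obtain ⟨v, hv⟩ := exists_apply_eq_add_mul hu κ
    ext a
    change Ideal.Quotient.mk _ ((κ : Multiplicative (AddAut R)).toAdd a) = Ideal.Quotient.mk _ a
    rw [hv, Ideal.Quotient.eq]
    exact Ideal.mem_span_singleton'.2 ⟨v * a, by ring⟩
  -- `K` is abelian and acts trivially on `R ⧸ (π)`, so `s ↦ (s.left mod π, s.right)` is a
  -- homomorphism to an abelian group whose kernel is `inlIdeal K (π)`.
  let F := (lift red 1 fun κ => by rw [hred]; ext; simp).prod rightHom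
  intro s hs
  obtain ⟨hl, hr⟩ := Prod.mk_eq_one.1 (Abelianization.commutator_subset_ker F hs)
  have hs : s = inl s.left := SemidirectProduct.ext rfl hr
  rw [hs, lift_inl] at hl
  rw [hs]
  exact inl_mem_inlIdeal.2 (Ideal.Quotient.eq_zero_iff_mem.1 (congrArg Multiplicative.toAdd hl))

theorem top_lowerCentralSeries_succ_eq_inlIdeal (hu : (u : R) = π + 1) (k : ℕ) :
    (⊤ : Subgroup (SemidirectAddAut R (zpowers (AddAut.mulLeft u)))).lowerCentralSeries (k + 1) =
      inlIdeal (zpowers (AddAut.mulLeft u)) (Ideal.span {π ^ (k + 1)}) := by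
  induction k with
  | zero =>
    refine le_antisymm (by rw [zero_add, pow_one]; exact commutator_le_inlIdeal_span hu) ?_
    rw [← commutator_inlIdeal_span_pow_top hu 0]
    exact commutator_mono le_top le_rfl
  | succ k ih => rw [Subgroup.lowerCentralSeries_succ, ih, commutator_inlIdeal_span_pow_top hu]

theorem card_inlIdeal (I : Ideal R) : Nat.card (inlIdeal K I) = Nat.card I :=
  card_map_of_injective inl_injective

end SemidirectAddAut

theorem ZMod.toAddSubgroup_span_singleton_eq_zmultiples {m : ℕ} (x : ZMod m) :
    (Ideal.span {x} : Ideal (ZMod m)).toAddSubgroup = AddSubgroup.zmultiples x := by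
  ext y
  simp only [Submodule.mem_toAddSubgroup, Ideal.mem_span_singleton', AddSubgroup.mem_zmultiples_iff]
  constructor
  · rintro ⟨a, rfl⟩
    obtain ⟨k, rfl⟩ := ZMod.intCast_surjective a
    exact ⟨k, zsmul_eq_mul _ _⟩
  · rintro ⟨k, rfl⟩
    exact ⟨k, (zsmul_eq_mul _ _).symm⟩

section PrimePower

variable {p n : ℕ}

theorem ZMod.card_span_natCast_pow (hp : p.Prime) {k : ℕ} (hk : k ≤ n) :
    Nat.card (Ideal.span {(p : ZMod (p ^ n)) ^ k}) = p ^ (n - k) := by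
  change Nat.card (Ideal.span {(p : ZMod (p ^ n)) ^ k} : Ideal (ZMod (p ^ n))).toAddSubgroup = _
  rw [ZMod.toAddSubgroup_span_singleton_eq_zmultiples, Nat.card_zmultiples, ← Nat.cast_pow,
    ZMod.addOrderOf_coe _ (pow_ne_zero n hp.ne_zero), Nat.gcd_eq_right (pow_dvd_pow p hk),
    Nat.pow_div hk hp.pos]

theorem ZMod.orderOf_unit_of_coe_eq_natCast_add_one (hp : p.Prime) (hodd : Odd p) (hn : n ≠ 0)
    {u : (ZMod (p ^ n))ˣ} (hu : (u : ZMod (p ^ n)) = p + 1) : orderOf u = p ^ (n - 1) := by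
  obtain ⟨n, rfl⟩ := Nat.exists_eq_add_one_of_ne_zero hn
  rw [← orderOf_units, hu, add_comm (p : ZMod (p ^ (n + 1))), Nat.add_sub_cancel]
  exact ZMod.orderOf_one_add_prime hp (hodd.ne_two_of_dvd_nat dvd_rfl) n

theorem AddAut.mulLeft_injective {R : Type*} [Semiring R] :
    Function.Injective (AddAut.mulLeft : Rˣ →* Multiplicative (AddAut R)) := fun a b h =>
  Units.ext <| by
    have h1 : (a : R) * 1 = b * 1 := congrArg (fun f : Multiplicative (AddAut R) => f.toAdd 1) h
    rwa [mul_one, mul_one] at h1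

theorem SemidirectAddAut.card_zmod_zpowers_mulLeft (hp : p.Prime) (hodd : Odd p) (hn : n ≠ 0)
    {u : (ZMod (p ^ n))ˣ} (hu : (u : ZMod (p ^ n)) = p + 1) :
    Nat.card (SemidirectAddAut (ZMod (p ^ n)) (Subgroup.zpowers (AddAut.mulLeft u))) =
      p ^ n * p ^ (n - 1) := by
  rw [SemidirectProduct.card, Nat.card_zpowers, orderOf_injective _ AddAut.mulLeft_injective,
    ZMod.orderOf_unit_of_coe_eq_natCast_add_one hp hodd hn hu, Nat.card_congr Multiplicative.toAdd,
    Nat.card_zmod]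

end PrimePower

/-- For odd `p` and `n ≥ 2`, with `N = Z/pⁿ`, `σ : x ↦ (p+1)·x` generating the
Sylow `p`-subgroup `K` of `Aut N`, and `G = N ⋊ K`, we have `|G : G'| = pⁿ`,
`|γᵢ(G) : γᵢ₊₁(G)| = p` for `i = 2, …, n`, and `G` has nilpotency class `n`.
(Here `γᵢ(G)` is `lowerCentralSeries G (i-1)` in Mathlib's indexing.) -/
theorem lcs_of_cyclic_semidirect (p n : ℕ) (hp : p.Prime) (hodd : Odd p)
    (hn : 2 ≤ n) (u : (ZMod (p ^ n))ˣ)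
    (hu : (u : ZMod (p ^ n)) = (p : ZMod (p ^ n)) + 1)
    (K : Subgroup (Multiplicative (AddAut (ZMod (p ^ n)))))
    (hK : K = Subgroup.zpowers (AddAut.mulLeft u)) :
    ∀ (G : Type) [Group G],
      Nonempty (G ≃* SemidirectProduct (Multiplicative (ZMod (p ^ n))) K
        ((addAutToMulAut (ZMod (p ^ n))).comp K.subtype)) →
      Nat.card (Abelianization G) = p ^ n ∧
        (∀ i, 2 ≤ i → i ≤ n →
          ((⊤ : Subgroup G).lowerCentralSeries i).relIndex ((⊤ : Subgroup G).lowerCentralSeries (i - 1)) = p) ∧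
        (⊤ : Subgroup G).lowerCentralSeries n = ⊥ ∧ (⊤ : Subgroup G).lowerCentralSeries (n - 1) ≠ ⊥ := by
  rintro G _ ⟨e⟩
  subst hK
  have hcard (k : ℕ) (hk : 1 ≤ k) (hkn : k ≤ n) :
      Nat.card ((⊤ : Subgroup G).lowerCentralSeries k) = p ^ (n - k) := by
    obtain ⟨k, rfl⟩ := Nat.exists_eq_add_of_le' hk
    rw [e.card_top_lowerCentralSeries, SemidirectAddAut.top_lowerCentralSeries_succ_eq_inlIdeal hu,
      SemidirectAddAut.card_inlIdeal, ZMod.card_span_natCast_pow hp hkn]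
  have hG : Nat.card G = p ^ n * p ^ (n - 1) :=
    (Nat.card_congr e.toEquiv).trans
      (SemidirectAddAut.card_zmod_zpowers_mulLeft hp hodd (by omega) hu)
  refine ⟨?_, fun i hi hin => ?_, ?_, ?_⟩
  · have h := (commutator G).card_mul_index
    rw [← Subgroup.top_lowerCentralSeries_one, hcard 1 le_rfl (by omega), hG, mul_comm (p ^ n)] at h
    exact Nat.eq_of_mul_eq_mul_left (pow_pos hp.pos _) h
  · have h := Subgroup.card_mul_relIndex
      ((⊤ : Subgroup G).lowerCentralSeries_antitone (Nat.sub_le i 1))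
    rw [hcard i (by omega) hin, hcard (i - 1) (by omega) (by omega),
      show n - (i - 1) = n - i + 1 by omega, pow_succ] at h
    exact Nat.eq_of_mul_eq_mul_left (pow_pos hp.pos _) h
  · rw [← Subgroup.card_eq_one, hcard n (by omega) le_rfl, Nat.sub_self, pow_zero]
  · rw [Ne, ← Subgroup.card_eq_one, hcard (n - 1) (by omega) (by omega),
      show n - (n - 1) = 1 by omega, pow_one]
    exact hp.ne_one
end

section
/- Let p be an odd prime, n ≥ 2, N = Z/p^n, K the Sylow p-subgroup of Aut(N), and G = N ⋊ K. Then G is weakly-top: every subgroup H ≤ G satisfies |H/H'| ≤ p^n = |G/G'|. -/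
theorem key_val {p : ℕ} (hp : p.Prime) (hodd : Odd p) {m : ℕ} (hm : m ≠ 0) :
    padicValNat p ((p + 1) ^ m - 1) = 1 + padicValNat p m := by
  haveI : Fact p.Prime := ⟨hp⟩
  have hx : ¬ p ∣ p + 1 := by
    intro h; exact hp.not_dvd_one ((Nat.dvd_add_right (dvd_refl p)).mp h)
  have h := padicValNat.pow_sub_pow (p := p) (x := p + 1) (y := 1) hodd
    (hyx := Nat.succ_lt_succ hp.pos) (hxy := by simp) (hx := hx) (hn := hm)
  simpa [padicValNat.self hp.one_lt] using h

theorem Dm_ne_zero {p m : ℕ} (hp : p.Prime) (hm : m ≠ 0) : (p + 1) ^ m - 1 ≠ 0 := by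
  have h1 : 1 < (p+1)^m := Nat.one_lt_pow hm (Nat.succ_lt_succ hp.pos)
  omega

theorem key_dvd {p : ℕ} (hp : p.Prime) (hodd : Odd p) {m k : ℕ} (hm : m ≠ 0) :
    p ^ k ∣ (p + 1) ^ m - 1 ↔ k ≤ 1 + padicValNat p m := by
  haveI : Fact p.Prime := ⟨hp⟩
  rw [padicValNat_dvd_iff_le (Dm_ne_zero hp hm), key_val hp hodd hm]

section ZModNT
variable {p n : ℕ} (hp : p.Prime) (hodd : Odd p) (hn : 2 ≤ n)
  {u : (ZMod (p ^ n))ˣ} (hu : (u : ZMod (p ^ n)) = (p : ZMod (p ^ n)) + 1)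
include hp hodd hu

theorem uval_pow_sub_one (m : ℕ) :
    ((u : ZMod (p^n))) ^ m - 1 = (((p+1)^m - 1 : ℕ) : ZMod (p^n)) := by
  have h1 : ((p+1)^m - 1 : ℕ) + 1 = (p+1)^m := by
    have := Nat.one_le_pow m (p+1) (by omega); omega
  have h2 : ((((p+1)^m - 1 : ℕ) + 1 : ℕ) : ZMod (p^n)) = (((p+1)^m : ℕ) : ZMod (p^n)) := by
    rw [h1]
  push_cast at h2
  rw [hu]
  push_cast
  linear_combination -h2

theorem upow_eq_one_iff {m : ℕ} (hm : m ≠ 0) :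
    u ^ m = 1 ↔ n ≤ 1 + padicValNat p m := by
  rw [← key_dvd hp hodd hm,
    ← ZMod.natCast_eq_zero_iff ((p+1)^m - 1) (p^n),
    ← uval_pow_sub_one hp hodd hu m, sub_eq_zero,
    Units.ext_iff, Units.val_pow_eq_pow_val, Units.val_one]

theorem orderOf_u (hn : 2 ≤ n) : orderOf u = p ^ (n - 1) := by
  haveI : Fact p.Prime := ⟨hp⟩
  have h1 : u ^ p ^ (n-1) = 1 := by
    rw [upow_eq_one_iff hp hodd hu (pow_ne_zero _ hp.ne_zero), padicValNat.prime_pow]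
    omega
  have h2 : ¬ u ^ p ^ (n-2) = 1 := by
    rw [upow_eq_one_iff hp hodd hu (pow_ne_zero _ hp.ne_zero), padicValNat.prime_pow]
    omega
  have h3 : n - 1 = (n - 2) + 1 := by omega
  rw [h3] at h1 ⊢
  exact orderOf_eq_prime_pow h2 h1

theorem orderOf_le_addOrderOf (m : ℕ) :
    orderOf (u ^ m) ≤ addOrderOf ((↑(u ^ m) : ZMod (p^n)) - 1) := by
  haveI : Fact p.Prime := ⟨hp⟩
  haveI : NeZero (p ^ n) := ⟨pow_ne_zero n hp.ne_zero⟩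
  rcases eq_or_ne m 0 with rfl | hm
  · simp
  set c : ZMod (p^n) := (↑(u ^ m) : ZMod (p^n)) - 1 with hc
  have hcval : c = (((p+1)^m - 1 : ℕ) : ZMod (p^n)) := by
    rw [hc, Units.val_pow_eq_pow_val]; exact uval_pow_sub_one hp hodd hu m
  have ht : addOrderOf c ∣ p ^ n := by
    apply addOrderOf_dvd_of_nsmul_eq_zero
    rw [hcval, nsmul_eq_mul, ← Nat.cast_mul, ZMod.natCast_eq_zero_iff]
    exact Dvd.dvd.mul_right dvd_rfl _
  obtain ⟨e, he, hte⟩ := (Nat.dvd_prime_pow hp).mp ht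
  apply Nat.le_of_dvd (addOrderOf_pos c)
  apply orderOf_dvd_of_pow_eq_one
  rw [← pow_mul, hte, upow_eq_one_iff hp hodd hu (Nat.mul_ne_zero hm (pow_ne_zero _ hp.ne_zero))]
  -- from addOrderOf: p^e • c = 0
  have h0 : (addOrderOf c) • c = 0 := addOrderOf_nsmul_eq_zero c
  rw [hte, hcval, nsmul_eq_mul, ← Nat.cast_mul, ZMod.natCast_eq_zero_iff] at h0
  -- h0 : p^n ∣ p^e * D m
  have hD := Dm_ne_zero (m := m) hp hm
  have hval : n ≤ e + padicValNat p ((p+1)^m - 1) := by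
    have h4 := padicValNat_dvd_iff_le (p := p) (n := n) (a := p^e * ((p+1)^m-1))
      (Nat.mul_ne_zero (pow_ne_zero _ hp.ne_zero) hD)
    rw [h4, padicValNat.mul (pow_ne_zero _ hp.ne_zero) hD, padicValNat.prime_pow] at h0
    exact h0
  rw [key_val hp hodd hm] at hval
  rw [padicValNat.mul hm (pow_ne_zero _ hp.ne_zero), padicValNat.prime_pow]
  omega
end ZModNT

open SemidirectProduct
open scoped commutatorElement

section Generic
variable {N K : Type*} [CommGroup N] [Group K] {φ : K →* MulAut N}

theorem eq_inl_left_of_right_eq_one {a : N ⋊[φ] K} (h : a.right = 1) :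
    inl a.left = a := by
  conv_rhs => rw [← inl_left_mul_inr_right a]
  rw [h, map_one, mul_one]

theorem sd_conj_inl (a : N ⋊[φ] K) (x : N) :
    a * inl x * a⁻¹ = inl (φ a.right x) := by
  ext <;>
  simp [SemidirectProduct.mul_left, SemidirectProduct.mul_right, SemidirectProduct.inv_left,
    SemidirectProduct.inv_right, mul_comm, mul_assoc]

theorem sd_comm_inl (a : N ⋊[φ] K) (x : N) :
    ⁅a, (inl x : N ⋊[φ] K)⁆ = inl (φ a.right x * x⁻¹) := by
  calc ⁅a, (inl x : N ⋊[φ] K)⁆ = a * inl x * a⁻¹ * (inl x)⁻¹ := rfl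
    _ = inl (φ a.right x) * (inl x)⁻¹ := by rw [sd_conj_inl]
    _ = inl (φ a.right x * x⁻¹) := by rw [map_mul, map_inv]

/-- Equiv with the product, for cardinality purposes. -/
def sdEquivProd : (N ⋊[φ] K) ≃ N × K where
  toFun a := (a.left, a.right)
  invFun q := ⟨q.1, q.2⟩
  left_inv _ := rfl
  right_inv _ := rfl

/-- The kernel of `rightHom` restricted to a subgroup `H` is isomorphic to `H.comap inl`. -/
noncomputable def sdKerEquiv (H : Subgroup (N ⋊[φ] K)) :
    ((SemidirectProduct.rightHom.comp H.subtype).ker) ≃* (H.comap inl) where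
  toFun z := ⟨(z.1.1).left, by
    have hz : (z.1.1).right = 1 := z.2
    rw [Subgroup.mem_comap, eq_inl_left_of_right_eq_one hz]
    exact z.1.2⟩
  invFun x := ⟨⟨inl x.1, x.2⟩, by simp [MonoidHom.mem_ker]⟩
  left_inv z := by
    apply Subtype.ext; apply Subtype.ext
    exact eq_inl_left_of_right_eq_one z.2
  right_inv x := by apply Subtype.ext; rfl
  map_mul' z w := by
    apply Subtype.ext
    have hz : (z.1.1).right = 1 := z.2
    show ((z.1.1 * w.1.1).left) = (z.1.1).left * (w.1.1).left
    rw [mul_left, hz, map_one, MulAut.one_apply]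

theorem sd_card_subgroup (H : Subgroup (N ⋊[φ] K)) [Finite (N ⋊[φ] K)] :
    Nat.card H = Nat.card (H.map SemidirectProduct.rightHom) * Nat.card (H.comap inl) := by
  rw [Subgroup.card_eq_card_quotient_mul_card_subgroup
    ((SemidirectProduct.rightHom.comp H.subtype).ker)]
  congr 1
  · rw [Nat.card_congr (QuotientGroup.quotientKerEquivRange _).toEquiv]
    congr 1
    rw [MonoidHom.range_comp, Subgroup.range_subtype]
  · exact Nat.card_congr (sdKerEquiv H).toEquiv

end Generic

/-- Multiplication by `c` as an endomorphism of `Multiplicative (ZMod q)`. -/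
def psi {q : ℕ} (c : ZMod q) :
    Multiplicative (ZMod q) →* Multiplicative (ZMod q) :=
  AddMonoidHom.toMultiplicative (AddMonoidHom.mulLeft c)

theorem psi_apply {q : ℕ} (c : ZMod q) (x : Multiplicative (ZMod q)) :
    psi c x = Multiplicative.ofAdd (c * x.toAdd) := rfl

theorem psi_range_card {q : ℕ} [NeZero q] (c : ZMod q) :
    Nat.card (psi c).range = addOrderOf c := by
  rw [← Nat.card_zmultiples c]
  apply Nat.card_congr
  apply Equiv.subtypeEquiv (Multiplicative.toAdd (α := ZMod q))
  intro x
  constructor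
  · rintro ⟨y, rfl⟩
    rw [psi_apply]
    refine ⟨(ZMod.val (Multiplicative.toAdd y) : ℤ), ?_⟩
    push_cast
    rw [zsmul_eq_mul]
    push_cast
    rw [ZMod.natCast_rightInverse _, toAdd_ofAdd, mul_comm]
  · rintro ⟨k, hk⟩
    refine ⟨Multiplicative.ofAdd ((k : ZMod q)), ?_⟩
    rw [psi_apply]
    apply Multiplicative.toAdd.injective
    rw [toAdd_ofAdd, toAdd_ofAdd, ← hk]
    show c * (k : ZMod q) = k • c
    rw [zsmul_eq_mul, mul_comm]

theorem psi_ker_card {q : ℕ} [NeZero q] (c : ZMod q) :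
    Nat.card (psi c).ker * addOrderOf c = q := by
  have h1 : Nat.card (Multiplicative (ZMod q)) = q := by
    rw [Nat.card_congr (Multiplicative.toAdd (α := ZMod q)), Nat.card_zmod]
  rw [Subgroup.card_eq_card_quotient_mul_card_subgroup (psi c).ker,
    Nat.card_congr (QuotientGroup.quotientKerEquivRange (psi c)).toEquiv,
    psi_range_card] at h1
  rw [mul_comm]; exact h1

theorem mulLeft_toAdd_apply {R : Type*} [Semiring R] (u : Rˣ) (x : R) :
    Multiplicative.toAdd (AddAut.mulLeft u) x = u • x := rfl

section Concrete
open SemidirectProduct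
variable {p n : ℕ} (u : (ZMod (p ^ n))ˣ)

theorem mulLeft_injective : Function.Injective (AddAut.mulLeft : (ZMod (p^n))ˣ →* Multiplicative (AddAut (ZMod (p^n)))) := by
  intro a b h
  have := congrArg (fun f : AddAut (ZMod (p^n)) => f 1) h
  simpa [Units.ext_iff, Units.smul_def] using this

theorem isCyclic_K : IsCyclic (Subgroup.zpowers (AddAut.mulLeft u)) := by
  refine ⟨⟨AddAut.mulLeft u, Subgroup.mem_zpowers _⟩, ?_⟩
  rintro ⟨x, mz, hmz⟩
  exact ⟨mz, by ext; simp [← hmz, Subgroup.coe_zpow]⟩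

theorem card_K :
    Nat.card (Subgroup.zpowers (AddAut.mulLeft u)) = orderOf u := by
  rw [Nat.card_zpowers, orderOf_injective _ (mulLeft_injective)]

end Concrete

section MainLe
open SemidirectProduct
variable {p n : ℕ} {u : (ZMod (p ^ n))ˣ}

set_option maxHeartbeats 1000000 in
theorem main_le (hp : p.Prime) (hodd : Odd p) (hn : 2 ≤ n)
    (hu : (u : ZMod (p ^ n)) = (p : ZMod (p ^ n)) + 1)
    (H : Subgroup (SemidirectProduct (Multiplicative (ZMod (p ^ n)))
      (Subgroup.zpowers (AddAut.mulLeft u))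
      ((addAutToMulAut (ZMod (p ^ n))).comp (Subgroup.zpowers (AddAut.mulLeft u)).subtype))) :
    Nat.card (Abelianization H) ≤ p ^ n := by
  haveI : Fact p.Prime := ⟨hp⟩
  haveI : NeZero (p ^ n) := ⟨pow_ne_zero n hp.ne_zero⟩
  haveI : Finite (SemidirectProduct (Multiplicative (ZMod (p ^ n)))
      (Subgroup.zpowers (AddAut.mulLeft u))
      ((addAutToMulAut (ZMod (p ^ n))).comp (Subgroup.zpowers (AddAut.mulLeft u)).subtype)) :=
    Finite.of_equiv _ sdEquivProd.symm
  set A := H.comap (inl (φ := (addAutToMulAut (ZMod (p ^ n))).comp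
      (Subgroup.zpowers (AddAut.mulLeft u)).subtype)) with hAdef
  set Q := H.map SemidirectProduct.rightHom with hQdef
  have hcard : Nat.card H = Nat.card Q * Nat.card A := sd_card_subgroup H
  haveI : IsCyclic (Subgroup.zpowers (AddAut.mulLeft u)) := isCyclic_K u
  obtain ⟨q, hq⟩ := IsCyclic.exists_generator (α := Q)
  set k := Q.subtype q with hkdef
  have hQcard : Nat.card Q = orderOf k := by
    rw [hkdef, orderOf_injective Q.subtype (Subgroup.subtype_injective Q) q]
    exact (orderOf_eq_card_of_forall_mem_zpowers hq).symm
  obtain ⟨mz, hmz⟩ := k.2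
  have hordu : orderOf (AddAut.mulLeft u) = p ^ (n - 1) := by
    rw [orderOf_injective _ (mulLeft_injective), orderOf_u hp hodd hu hn]
  have hog : 0 < orderOf (AddAut.mulLeft u) := by rw [hordu]; exact pow_pos hp.pos _
  set m : ℕ := (mz % (orderOf (AddAut.mulLeft u) : ℤ)).toNat with hmdef
  have hgm : (AddAut.mulLeft u) ^ m = (k : Multiplicative (AddAut (ZMod (p ^ n)))) := by
    rw [← zpow_natCast, hmdef, Int.toNat_of_nonneg (Int.emod_nonneg mz (by exact_mod_cast hog.ne')),
      zpow_mod_orderOf]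
    exact hmz
  set v := u ^ m with hvdef
  have hkv : (k : Multiplicative (AddAut (ZMod (p ^ n)))) = AddAut.mulLeft v := by rw [← hgm, ← map_pow]
  have hordk : orderOf k = orderOf v := by
    rw [← orderOf_injective (Subgroup.zpowers (AddAut.mulLeft u)).subtype
      (Subgroup.subtype_injective _) k]
    show orderOf (k : Multiplicative (AddAut (ZMod (p ^ n)))) = orderOf v
    rw [hkv, orderOf_injective _ (mulLeft_injective)]
  set c₀ : ZMod (p ^ n) := (v : ZMod (p ^ n)) - 1 with hc₀def
  set ψ := psi c₀ with hψdef
  set W := A.map ψ with hWdef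
  obtain ⟨h, hhH, hhk⟩ := q.2
  have hWle : W.map inl ≤ ⁅H, H⁆ := by
    rintro z ⟨y, ⟨x, hxA, rfl⟩, rfl⟩
    have hc : ⁅h, (inl x : SemidirectProduct (Multiplicative (ZMod (p ^ n)))
        (Subgroup.zpowers (AddAut.mulLeft u))
        ((addAutToMulAut (ZMod (p ^ n))).comp (Subgroup.zpowers (AddAut.mulLeft u)).subtype))⁆
        = inl (ψ x) := by
      rw [sd_comm_inl]
      congr 1
      have hr : h.right = k := hhk
      apply Multiplicative.toAdd.injective
      rw [toAdd_mul, toAdd_inv, hr]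
      show ((k : Multiplicative (AddAut (ZMod (p ^ n)))) : AddAut (ZMod (p ^ n))) x.toAdd + (- x.toAdd) = c₀ * x.toAdd
      rw [hkv]
      simp only [AddAut.mulLeft_apply_apply, mulLeft_toAdd_apply, Units.smul_def, smul_eq_mul, hc₀def]
      ring
    rw [← hc]
    exact Subgroup.commutator_mem_commutator hhH (Subgroup.mem_comap.mp hxA)
  have hA1 : Nat.card A = Nat.card W * Nat.card (ψ.comp A.subtype).ker := by
    rw [Subgroup.card_eq_card_quotient_mul_card_subgroup (ψ.comp A.subtype).ker]
    congr 1
    rw [Nat.card_congr (QuotientGroup.quotientKerEquivRange _).toEquiv]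
    congr 1
    rw [MonoidHom.range_comp, Subgroup.range_subtype]
  have hker_le : Nat.card (ψ.comp A.subtype).ker ≤ Nat.card ψ.ker := by
    apply Nat.card_le_card_of_injective
      (fun z : (ψ.comp A.subtype).ker => (⟨A.subtype z.1, z.2⟩ : ψ.ker))
    intro z w hzw
    have h3 := congrArg Subtype.val hzw
    exact Subtype.ext (Subgroup.subtype_injective A h3)
  have hpsiker : Nat.card ψ.ker * addOrderOf c₀ = p ^ n := psi_ker_card c₀
  have hQd : Nat.card Q ≤ addOrderOf c₀ := by
    rw [hQcard, hordk, hvdef]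
    exact orderOf_le_addOrderOf hp hodd hu m
  have hWH : Nat.card W ≤ Nat.card (commutator H) := by
    have hmapeq : Subgroup.map H.subtype (commutator H) = ⁅H, H⁆ := by
      rw [commutator_def, Subgroup.map_commutator, ← MonoidHom.range_eq_map,
        Subgroup.range_subtype]
    have h1 : Nat.card (commutator H) = Nat.card (Subgroup.map H.subtype (commutator H)) :=
      Nat.card_congr (Subgroup.equivMapOfInjective (commutator H) H.subtype
        (Subgroup.subtype_injective H)).toEquiv
    have h2 := Nat.card_congr (Subgroup.equivMapOfInjective W _
      (SemidirectProduct.inl_injective (φ := (addAutToMulAut (ZMod (p ^ n))).comp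
        (Subgroup.zpowers (AddAut.mulLeft u)).subtype))).toEquiv
    rw [h2, h1, hmapeq]
    exact Subgroup.card_le_of_le hWle
  have hAb : Nat.card (Abelianization H) * Nat.card (commutator H) = Nat.card H := by
    have : Nat.card (Abelianization H) = Nat.card ((H : Type _) ⧸ commutator H) := rfl
    rw [this, ← Subgroup.card_eq_card_quotient_mul_card_subgroup (commutator H)]
  have hpos : 0 < Nat.card (commutator H) := Nat.card_pos
  have step1 : Nat.card (Abelianization H) * Nat.card (commutator H)
      ≤ (addOrderOf c₀ * Nat.card (ψ.comp A.subtype).ker) * Nat.card (commutator H) := by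
    rw [hAb, hcard, hA1]
    calc Nat.card Q * (Nat.card W * Nat.card (ψ.comp A.subtype).ker)
        ≤ addOrderOf c₀ * (Nat.card (commutator H) * Nat.card (ψ.comp A.subtype).ker) :=
          Nat.mul_le_mul hQd (Nat.mul_le_mul_right _ hWH)
      _ = (addOrderOf c₀ * Nat.card (ψ.comp A.subtype).ker) * Nat.card (commutator H) := by ring
  have step2 : Nat.card (Abelianization H) ≤ addOrderOf c₀ * Nat.card (ψ.comp A.subtype).ker :=
    Nat.le_of_mul_le_mul_right step1 hpos
  calc Nat.card (Abelianization H) ≤ addOrderOf c₀ * Nat.card (ψ.comp A.subtype).ker := step2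
    _ ≤ addOrderOf c₀ * Nat.card ψ.ker := Nat.mul_le_mul_left _ hker_le
    _ = p ^ n := by rw [mul_comm]; exact hpsiker

end MainLe

section MainEq
open SemidirectProduct
variable {p n : ℕ} {u : (ZMod (p ^ n))ˣ}

set_option maxHeartbeats 1000000 in
theorem main_eq (hp : p.Prime) (hodd : Odd p) (hn : 2 ≤ n)
    (hu : (u : ZMod (p ^ n)) = (p : ZMod (p ^ n)) + 1) :
    Nat.card (Abelianization (SemidirectProduct (Multiplicative (ZMod (p ^ n)))
      (Subgroup.zpowers (AddAut.mulLeft u))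
      ((addAutToMulAut (ZMod (p ^ n))).comp (Subgroup.zpowers (AddAut.mulLeft u)).subtype)))
      = p ^ n := by
  haveI : Fact p.Prime := ⟨hp⟩
  haveI : NeZero (p ^ n) := ⟨pow_ne_zero n hp.ne_zero⟩
  set π : ZMod (p ^ n) →+* ZMod p := ZMod.castHom (dvd_pow_self p (by omega : n ≠ 0)) (ZMod p)
    with hπdef
  -- The units map sends u to 1
  have hwu : Units.map (π : ZMod (p ^ n) →* ZMod p) u = 1 := by
    apply Units.ext
    show π (u : ZMod (p ^ n)) = 1
    rw [hu, map_add, map_one, map_natCast, ZMod.natCast_self, zero_add]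
  -- every element of K acts trivially mod p
  have hπK : ∀ k : Subgroup.zpowers (AddAut.mulLeft u), ∀ x : ZMod (p ^ n),
      π (((k : Multiplicative (AddAut (ZMod (p ^ n)))) : AddAut (ZMod (p ^ n))) x) = π x := by
    rintro ⟨k, mz, hmz⟩ x
    show π (((k : Multiplicative (AddAut (ZMod (p ^ n)))) : AddAut (ZMod (p ^ n))) x) = π x
    rw [← hmz]
    show π ((AddAut.mulLeft u ^ mz) x) = π x
    rw [← map_zpow]
    simp only [AddAut.mulLeft_apply_apply, mulLeft_toAdd_apply, Units.smul_def, smul_eq_mul]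
    rw [map_mul]
    have h1 : π ((u ^ mz : (ZMod (p ^ n))ˣ) : ZMod (p ^ n))
        = ((Units.map (π : ZMod (p ^ n) →* ZMod p) (u ^ mz) : (ZMod p)ˣ) : ZMod p) := rfl
    rw [h1, map_zpow, hwu, one_zpow, Units.val_one, one_mul]
  set f₁ : Multiplicative (ZMod (p ^ n)) →* Multiplicative (ZMod p) × (Subgroup.zpowers (AddAut.mulLeft u)) :=
    (MonoidHom.inl _ _).comp (AddMonoidHom.toMultiplicative π.toAddMonoidHom) with hf₁def
  set f₂ : (Subgroup.zpowers (AddAut.mulLeft u) : Subgroup (Multiplicative (AddAut (ZMod (p ^ n))))) →*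
      Multiplicative (ZMod p) × (Subgroup.zpowers (AddAut.mulLeft u)) :=
    MonoidHom.inr _ _ with hf₂def
  have hcompat : ∀ k, f₁.comp (((addAutToMulAut (ZMod (p ^ n))).comp
      (Subgroup.zpowers (AddAut.mulLeft u)).subtype k)).toMonoidHom
      = (MulAut.conj (f₂ k)).toMonoidHom.comp f₁ := by
    intro k
    ext x
    · show π (((k : Multiplicative (AddAut (ZMod (p ^ n)))) : AddAut (ZMod (p ^ n))) (Multiplicative.toAdd x)) = _
      rw [hπK k (Multiplicative.toAdd x)]
      simp [hf₁def, hf₂def, MulAut.conj_apply]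
      rfl
    · simp [hf₁def, hf₂def, MulAut.conj_apply]
  set f := SemidirectProduct.lift f₁ f₂ hcompat with hfdef
  have hsurj : Function.Surjective f := by
    rintro ⟨c, k⟩
    refine ⟨inl (Multiplicative.ofAdd ((ZMod.val c.toAdd : ZMod (p ^ n)))) * inr k, ?_⟩
    rw [map_mul, SemidirectProduct.lift_inl, SemidirectProduct.lift_inr]
    apply Prod.ext
    · show (Multiplicative.ofAdd (π ((ZMod.val c.toAdd : ZMod (p ^ n))))) * 1 = c
      rw [mul_one, map_natCast]
      apply Multiplicative.toAdd.injective
      show ((ZMod.val c.toAdd : ZMod p)) = c.toAdd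
      exact ZMod.natCast_rightInverse c.toAdd
    · show 1 * k = k
      rw [one_mul]
  have hkerle : f.ker ≤ commutator (SemidirectProduct (Multiplicative (ZMod (p ^ n)))
      (Subgroup.zpowers (AddAut.mulLeft u))
      ((addAutToMulAut (ZMod (p ^ n))).comp (Subgroup.zpowers (AddAut.mulLeft u)).subtype)) := by
    intro a ha
    rw [MonoidHom.mem_ker] at ha
    have ha1 : f a = (Multiplicative.ofAdd (π a.left.toAdd) * 1, 1 * a.right) := rfl
    rw [ha1] at ha
    have ha2 : π a.left.toAdd = 0 ∧ a.right = 1 := by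
      have h1 := congrArg Prod.fst ha
      have h2 := congrArg Prod.snd ha
      simp only [mul_one, one_mul] at h1 h2
      exact ⟨congrArg Multiplicative.toAdd h1, h2⟩
    -- p divides the value
    have hpd : p ∣ (a.left.toAdd).val := by
      have h4 := ha2.1
      rw [hπdef, ZMod.castHom_apply] at h4
      have h3 : ((a.left.toAdd).val : ZMod p) = 0 := by
        rw [ZMod.natCast_val]
        exact h4
      rwa [ZMod.natCast_eq_zero_iff] at h3
    obtain ⟨t, ht⟩ := hpd
    -- a is a commutator
    have haeq : a = ⁅(inr ⟨AddAut.mulLeft u, Subgroup.mem_zpowers _⟩ :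
        SemidirectProduct (Multiplicative (ZMod (p ^ n)))
        (Subgroup.zpowers (AddAut.mulLeft u))
        ((addAutToMulAut (ZMod (p ^ n))).comp (Subgroup.zpowers (AddAut.mulLeft u)).subtype)),
        inl (Multiplicative.ofAdd ((t : ZMod (p ^ n))))⁆ := by
      rw [sd_comm_inl, ← eq_inl_left_of_right_eq_one ha2.2]
      congr 1
      apply Multiplicative.toAdd.injective
      rw [toAdd_mul, toAdd_inv]
      have h5 : a.left.toAdd = ((p * t : ℕ) : ZMod (p ^ n)) := by
        rw [← ht]
        exact (ZMod.natCast_rightInverse _).symm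
      show a.left.toAdd = (AddAut.mulLeft u) ((t : ZMod (p ^ n))) + - ((t : ZMod (p ^ n)))
      simp only [AddAut.mulLeft_apply_apply, mulLeft_toAdd_apply, Units.smul_def, smul_eq_mul, hu, h5]
      push_cast
      ring
    rw [haeq]
    exact Subgroup.commutator_mem_commutator (Subgroup.mem_top _) (Subgroup.mem_top _)
  haveI : IsCyclic (Subgroup.zpowers (AddAut.mulLeft u)) := isCyclic_K u
  letI : CommGroup (Subgroup.zpowers (AddAut.mulLeft u)) := IsCyclic.commGroup
  have hkereq : commutator _ = f.ker :=
    le_antisymm (Abelianization.commutator_subset_ker (f := f)) hkerle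
  show Nat.card (_ ⧸ commutator _) = p ^ n
  rw [hkereq, Nat.card_congr (QuotientGroup.quotientKerEquivOfSurjective f hsurj).toEquiv,
    Nat.card_prod, Nat.card_congr (Multiplicative.toAdd (α := ZMod p)), Nat.card_zmod,
    card_K, orderOf_u hp hodd hu hn]
  rw [← pow_succ']
  congr 1
  omega

end MainEq

/-- For odd `p`, `n ≥ 2`, `N = Z/pⁿ`, `K` the Sylow `p`-subgroup of `Aut N`
generated by `x ↦ (p+1)·x`, the group `G = N ⋊ K` is weakly-top:
every subgroup `H ≤ G` satisfies `|H/H'| ≤ pⁿ = |G/G'|`. -/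
theorem cyclic_semidirect_weakly_top (p n : ℕ) (hp : p.Prime) (hodd : Odd p)
    (hn : 2 ≤ n) (u : (ZMod (p ^ n))ˣ)
    (hu : (u : ZMod (p ^ n)) = (p : ZMod (p ^ n)) + 1)
    (K : Subgroup (Multiplicative (AddAut (ZMod (p ^ n)))))
    (hK : K = Subgroup.zpowers (AddAut.mulLeft u)) :
    ∀ (G : Type) [Group G],
      Nonempty (G ≃* SemidirectProduct (Multiplicative (ZMod (p ^ n))) K
        ((addAutToMulAut (ZMod (p ^ n))).comp K.subtype)) →
      (∀ H : Subgroup G, Nat.card (Abelianization H) ≤ p ^ n) ∧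
        Nat.card (Abelianization G) = p ^ n := by
  subst hK
  intro G _ he
  obtain ⟨e⟩ := he
  constructor
  · intro H
    have h1 : Nat.card (Abelianization H) = Nat.card (Abelianization (H.map e.toMonoidHom)) :=
      Nat.card_congr (MulEquiv.abelianizationCongr (MulEquiv.subgroupMap e H)).toEquiv
    rw [h1]
    exact main_le hp hodd hn hu _
  · rw [Nat.card_congr (MulEquiv.abelianizationCongr e).toEquiv]
    exact main_eq hp hodd hn hu
end

section
/- Let A and B be isoclinic finite groups. If A is weakly-top, then B is weakly-top; and if A is top, then B is top. -/
open scoped commutatorElement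

/-- Two groups are isoclinic if there are isomorphisms between their central
quotients and their commutator subgroups which commute with the commutator
maps. -/
def Isoclinic (A B : Type*) [Group A] [Group B] : Prop :=
  ∃ (φ : ↥(commutator A) ≃* ↥(commutator B))
    (ψ : A ⧸ Subgroup.center A ≃* B ⧸ Subgroup.center B),
    ∀ (x y : A) (x' y' : B),
      ψ (QuotientGroup.mk x) = QuotientGroup.mk x' →
      ψ (QuotientGroup.mk y) = QuotientGroup.mk y' →
      (φ ⟨⁅x, y⁆, Subgroup.commutator_mem_commutator (Subgroup.mem_top x)
        (Subgroup.mem_top y)⟩ : B) = ⁅x', y'⁆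

section Aux

variable {G : Type*} [Group G]

lemma aux_map_commutator_subtype (H : Subgroup G) :
    (commutator ↥H).map H.subtype = ⁅H, H⁆ := by
  rw [commutator_def, Subgroup.map_commutator, ← MonoidHom.range_eq_map, H.range_subtype]

lemma aux_card_ab (H : Subgroup G) [Finite G] :
    Nat.card (Abelianization ↥H) * Nat.card ↥(⁅H, H⁆ : Subgroup G) = Nat.card ↥H := by
  have h2 : Nat.card ↥(⁅H, H⁆ : Subgroup G) = Nat.card (commutator ↥H) := by
    rw [← aux_map_commutator_subtype H]
    exact (Nat.card_congr
      ((commutator ↥H).equivMapOfInjective H.subtype H.subtype_injective).toEquiv).symm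
  have h1 := Subgroup.card_eq_card_quotient_mul_card_subgroup (commutator ↥H)
  rw [h2]
  exact h1.symm

lemma aux_comm_center_left {z : G} (hz : z ∈ Subgroup.center G) (g h : G) :
    ⁅g * z, h⁆ = ⁅g, h⁆ := by
  have hz' : ∀ w : G, w * z = z * w := Subgroup.mem_center_iff.mp hz
  calc ⁅g * z, h⁆ = g * (z * h * z⁻¹) * g⁻¹ * h⁻¹ := by
        rw [commutatorElement_def]; group
    _ = g * (h * z * z⁻¹) * g⁻¹ * h⁻¹ := by rw [← hz' h]
    _ = g * h * g⁻¹ * h⁻¹ := by group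
    _ = ⁅g, h⁆ := (commutatorElement_def g h).symm

lemma aux_comm_center_right {z : G} (hz : z ∈ Subgroup.center G) (g h : G) :
    ⁅g, h * z⁆ = ⁅g, h⁆ := by
  rw [← commutatorElement_inv, aux_comm_center_left hz, commutatorElement_inv]

lemma aux_commutator_sup_center (H : Subgroup G) :
    ⁅H ⊔ Subgroup.center G, H ⊔ Subgroup.center G⁆ = ⁅H, H⁆ := by
  apply le_antisymm
  · rw [Subgroup.commutator_le]
    intro x hx y hy
    rw [← SetLike.mem_coe, Subgroup.mul_normal] at hx hy
    obtain ⟨a, ha, za, hza, rfl⟩ := hx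
    obtain ⟨b, hb, zb, hzb, rfl⟩ := hy
    rw [aux_comm_center_left hza, aux_comm_center_right hzb]
    exact Subgroup.commutator_mem_commutator ha hb
  · exact Subgroup.commutator_mono le_sup_left le_sup_left

lemma aux_card_of_center_le (K : Subgroup G) [Finite G]
    (hZ : Subgroup.center G ≤ K) :
    Nat.card ↥K =
      Nat.card ↥(K.map (QuotientGroup.mk' (Subgroup.center G))) *
        Nat.card (Subgroup.center G) := by
  set f := (QuotientGroup.mk' (Subgroup.center G)).comp K.subtype with hf
  have hker : f.ker = (Subgroup.center G).subgroupOf K := by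
    rw [hf, ← MonoidHom.comap_ker, QuotientGroup.ker_mk']
    rfl
  have hrange : f.range = K.map (QuotientGroup.mk' (Subgroup.center G)) := by
    rw [hf, MonoidHom.range_comp, Subgroup.range_subtype]
  have h1 := Subgroup.card_eq_card_quotient_mul_card_subgroup f.ker
  rw [h1]
  congr 1
  · rw [← hrange]
    exact Nat.card_congr (QuotientGroup.quotientKerEquivRange f).toEquiv
  · rw [hker]
    exact Nat.card_congr (Subgroup.subgroupOfEquivOfLe hZ).toEquiv

end Aux

section Key

variable {A B : Type*} [Group A] [Group B]

/-- The core correspondence coming from an isoclinism: to each subgroup `L` of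
`B` containing the center corresponds a subgroup `K` of `A` with
`|K^ab| * |Z(B)| = |L^ab| * |Z(A)|`, and `K = ⊤ ↔ L = ⊤`. -/
lemma isoclinic_key [Finite A] [Finite B]
    (φ : ↥(commutator A) ≃* ↥(commutator B))
    (ψ : A ⧸ Subgroup.center A ≃* B ⧸ Subgroup.center B)
    (hc : ∀ (x y : A) (x' y' : B),
      ψ (QuotientGroup.mk x) = QuotientGroup.mk x' →
      ψ (QuotientGroup.mk y) = QuotientGroup.mk y' →
      (φ ⟨⁅x, y⁆, Subgroup.commutator_mem_commutator (Subgroup.mem_top x)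
        (Subgroup.mem_top y)⟩ : B) = ⁅x', y'⁆)
    (L : Subgroup B) (hL : Subgroup.center B ≤ L) :
    ∃ K : Subgroup A, (K = ⊤ ↔ L = ⊤) ∧
      Nat.card (Abelianization ↥K) * Nat.card (Subgroup.center B) =
        Nat.card (Abelianization ↥L) * Nat.card (Subgroup.center A) := by
  classical
  set mkA := QuotientGroup.mk' (Subgroup.center A) with hmkA
  set mkB := QuotientGroup.mk' (Subgroup.center B) with hmkB
  set Lq : Subgroup (B ⧸ Subgroup.center B) := L.map mkB with hLq
  set K : Subgroup A := (Lq.comap ψ.toMonoidHom).comap mkA with hK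
  have hZK : Subgroup.center A ≤ K := by
    intro z hz
    have : mkA z = 1 := by
      rwa [← MonoidHom.mem_ker, hmkA, QuotientGroup.ker_mk']
    simp only [hK, Subgroup.mem_comap, this, map_one]
    exact Subgroup.one_mem _
  have hmapK : K.map mkA = Lq.comap ψ.toMonoidHom :=
    Subgroup.map_comap_eq_self_of_surjective (QuotientGroup.mk'_surjective _) _
  -- membership characterizations
  have hmemK : ∀ x : A, x ∈ K ↔ ψ (QuotientGroup.mk x) ∈ Lq := by
    intro x
    simp only [hK, Subgroup.mem_comap, hmkA, QuotientGroup.mk'_apply, MulEquiv.coe_toMonoidHom]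
  have hliftB : ∀ x : A, x ∈ K → ∃ x' ∈ L, ψ (QuotientGroup.mk x) = QuotientGroup.mk x' := by
    intro x hx
    rw [hmemK] at hx
    obtain ⟨x', hx', hxx'⟩ := hx
    exact ⟨x', hx', hxx'.symm⟩
  have hliftA : ∀ x' : B, x' ∈ L → ∃ x ∈ K, ψ (QuotientGroup.mk x) = QuotientGroup.mk x' := by
    intro x' hx'
    obtain ⟨q, hq⟩ := ψ.surjective (QuotientGroup.mk x' : B ⧸ Subgroup.center B)
    have hqmem : q ∈ Lq.comap ψ.toMonoidHom := by
      simp only [Subgroup.mem_comap]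
      rw [show (ψ.toMonoidHom q : B ⧸ Subgroup.center B) = ψ q from rfl, hq]
      exact ⟨x', hx', rfl⟩
    rw [← hmapK] at hqmem
    obtain ⟨x, hx, hxq⟩ := hqmem
    refine ⟨x, hx, ?_⟩
    rw [show (QuotientGroup.mk x : A ⧸ Subgroup.center A) = mkA x from rfl, hxq, hq]
  -- commutator subgroups correspond
  have hfinj : Function.Injective ((commutator B).subtype.comp φ.toMonoidHom) :=
    fun a b hab => φ.injective (Subgroup.subtype_injective _ hab)
  have hKle : (⁅K, K⁆ : Subgroup A) ≤ commutator A :=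
    Subgroup.commutator_mono le_top le_top
  have hcomm_card : Nat.card ↥(⁅K, K⁆ : Subgroup A) = Nat.card ↥(⁅L, L⁆ : Subgroup B) := by
    have himg : ((⁅K, K⁆ : Subgroup A).subgroupOf (commutator A)).map
        ((commutator B).subtype.comp φ.toMonoidHom) = ⁅L, L⁆ := by
      apply le_antisymm
      · rw [Subgroup.map_le_iff_le_comap]
        have hQ : (⁅K, K⁆ : Subgroup A) ≤
            ((⁅L, L⁆ : Subgroup B).comap
              ((commutator B).subtype.comp φ.toMonoidHom)).map (commutator A).subtype := by
          rw [Subgroup.commutator_le]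
          intro x hx y hy
          obtain ⟨x', hx', hxx'⟩ := hliftB x hx
          obtain ⟨y', hy', hyy'⟩ := hliftB y hy
          have hφ := hc x y x' y' hxx' hyy'
          refine Subgroup.mem_map.mpr ⟨⟨⁅x, y⁆, Subgroup.commutator_mem_commutator
            (Subgroup.mem_top x) (Subgroup.mem_top y)⟩, ?_, rfl⟩
          refine Subgroup.mem_comap.mpr ?_
          simp only [MonoidHom.coe_comp, Function.comp_apply, Subgroup.coe_subtype,
            MulEquiv.coe_toMonoidHom]
          rw [hφ]
          exact Subgroup.commutator_mem_commutator hx' hy'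
        have := Subgroup.comap_mono (f := (commutator A).subtype) hQ
        rwa [Subgroup.comap_map_eq_self_of_injective (Subgroup.subtype_injective _)] at this
      · rw [Subgroup.commutator_le]
        intro x' hx' y' hy'
        obtain ⟨x, hx, hxx'⟩ := hliftA x' hx'
        obtain ⟨y, hy, hyy'⟩ := hliftA y' hy'
        have hφ := hc x y x' y' hxx' hyy'
        have hφ' : ((commutator B).subtype.comp φ.toMonoidHom)
            ⟨⁅x, y⁆, Subgroup.commutator_mem_commutator (Subgroup.mem_top x)
              (Subgroup.mem_top y)⟩ = ⁅x', y'⁆ := hφ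
        refine Subgroup.mem_map.mpr ⟨⟨⁅x, y⁆, Subgroup.commutator_mem_commutator
          (Subgroup.mem_top x) (Subgroup.mem_top y)⟩, ?_, hφ'⟩
        exact Subgroup.mem_subgroupOf.mpr (Subgroup.commutator_mem_commutator hx hy)
    calc Nat.card ↥(⁅K, K⁆ : Subgroup A)
        = Nat.card ↥((⁅K, K⁆ : Subgroup A).subgroupOf (commutator A)) :=
          (Nat.card_congr (Subgroup.subgroupOfEquivOfLe hKle).toEquiv).symm
      _ = Nat.card ↥(((⁅K, K⁆ : Subgroup A).subgroupOf (commutator A)).map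
            ((commutator B).subtype.comp φ.toMonoidHom)) :=
          Nat.card_congr (Subgroup.equivMapOfInjective _ _ hfinj).toEquiv
      _ = Nat.card ↥(⁅L, L⁆ : Subgroup B) := by rw [himg]
  -- quotient cardinalities correspond
  have hpsisurj : Function.Surjective ⇑ψ.toMonoidHom := ψ.surjective
  have hpsiinj : Function.Injective ⇑ψ.toMonoidHom := ψ.injective
  have hmapcomap : (Lq.comap ψ.toMonoidHom).map ψ.toMonoidHom = Lq :=
    Subgroup.map_comap_eq_self_of_surjective hpsisurj Lq
  have hq_card : Nat.card ↥(K.map mkA) = Nat.card ↥Lq := by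
    calc Nat.card ↥(K.map mkA)
        = Nat.card ↥((Lq.comap ψ.toMonoidHom).map ψ.toMonoidHom) := by
          rw [hmapK]
          exact Nat.card_congr (Subgroup.equivMapOfInjective _ _ hpsiinj).toEquiv
      _ = Nat.card ↥Lq := by rw [hmapcomap]
  -- top correspondence
  have htop : K = ⊤ ↔ L = ⊤ := by
    constructor
    · intro hKtop
      have h1 : Lq.comap ψ.toMonoidHom = ⊤ := by
        rw [← hmapK, hKtop, Subgroup.map_top_of_surjective _ (QuotientGroup.mk'_surjective _)]
      have h2 : Lq = ⊤ := by
        rw [← hmapcomap, h1, Subgroup.map_top_of_surjective _ hpsisurj]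
      have h3 := Subgroup.comap_mono (f := mkB) h2.ge
      rw [Subgroup.comap_top] at h3
      have h4 : Lq.comap mkB = L := by
        rw [hLq, Subgroup.comap_map_eq, hmkB, QuotientGroup.ker_mk', sup_eq_left.mpr hL]
      rw [← h4]
      exact le_antisymm le_top h3
    · intro hLtop
      rw [hK, hLq, hLtop, Subgroup.map_top_of_surjective _ (QuotientGroup.mk'_surjective _),
        Subgroup.comap_top, Subgroup.comap_top]
  -- cardinality bookkeeping
  refine ⟨K, htop, ?_⟩
  have e1 := aux_card_ab K
  have e2 := aux_card_ab L
  have e3 := aux_card_of_center_le K hZK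
  have e4 := aux_card_of_center_le L hL
  have dpos : 0 < Nat.card ↥(⁅L, L⁆ : Subgroup B) := Nat.card_pos
  apply Nat.eq_of_mul_eq_mul_right dpos
  calc Nat.card (Abelianization ↥K) * Nat.card (Subgroup.center B) *
        Nat.card ↥(⁅L, L⁆ : Subgroup B)
      = Nat.card (Abelianization ↥K) * Nat.card ↥(⁅K, K⁆ : Subgroup A) *
        Nat.card (Subgroup.center B) := by rw [hcomm_card]; ring
    _ = Nat.card ↥K * Nat.card (Subgroup.center B) := by rw [e1]
    _ = Nat.card ↥(K.map mkA) * Nat.card (Subgroup.center A) *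
        Nat.card (Subgroup.center B) := by rw [e3]
    _ = Nat.card ↥Lq * Nat.card (Subgroup.center B) * Nat.card (Subgroup.center A) := by
        rw [hq_card]; ring
    _ = Nat.card ↥L * Nat.card (Subgroup.center A) := by rw [← e4]
    _ = Nat.card (Abelianization ↥L) * Nat.card ↥(⁅L, L⁆ : Subgroup B) *
        Nat.card (Subgroup.center A) := by rw [e2]
    _ = Nat.card (Abelianization ↥L) * Nat.card (Subgroup.center A) *
        Nat.card ↥(⁅L, L⁆ : Subgroup B) := by ring

end Key

lemma aux_card_ab_top (G : Type*) [Group G] :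
    Nat.card (Abelianization ↥(⊤ : Subgroup G)) = Nat.card (Abelianization G) :=
  Nat.card_congr (Subgroup.topEquiv.abelianizationCongr).toEquiv

/-- Weakly-top and top are isoclinism invariants. -/
theorem isoclinic_weakly_top_top (A B : Type*) [Group A] [Group B]
    [Finite A] [Finite B] (h : Isoclinic A B) :
    (IsWeaklyTop A → IsWeaklyTop B) ∧ (IsTopGroup A → IsTopGroup B) := by
  obtain ⟨φ, ψ, hc⟩ := h
  -- global relation : |A^ab| * |Z(B)| = |B^ab| * |Z(A)|
  obtain ⟨K₀, hK₀top, hK₀⟩ := isoclinic_key φ ψ hc ⊤ le_top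
  rw [hK₀top.mpr rfl, aux_card_ab_top, aux_card_ab_top] at hK₀
  have cZApos : 0 < Nat.card (Subgroup.center A) := Nat.card_pos
  have cZBpos : 0 < Nat.card (Subgroup.center B) := Nat.card_pos
  -- the step from H to L = H ⊔ center B
  have hHL : ∀ H : Subgroup B,
      Nat.card (Abelianization ↥H) ≤
        Nat.card (Abelianization ↥(H ⊔ Subgroup.center B)) := by
    intro H
    set L := H ⊔ Subgroup.center B with hLdef
    have e1 := aux_card_ab H
    have e2 := aux_card_ab L
    rw [hLdef, aux_commutator_sup_center] at e2
    have hcard : Nat.card ↥H ≤ Nat.card ↥L :=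
      Subgroup.card_le_of_le le_sup_left
    have dpos : 0 < Nat.card ↥(⁅H, H⁆ : Subgroup B) := Nat.card_pos
    rw [← e1, ← e2] at hcard
    exact Nat.le_of_mul_le_mul_right hcard dpos
  constructor
  · intro hA H
    set L := H ⊔ Subgroup.center B with hLdef
    obtain ⟨K, _, hKL⟩ := isoclinic_key φ ψ hc L le_sup_right
    have h1 : Nat.card (Abelianization ↥L) * Nat.card (Subgroup.center A) ≤
        Nat.card (Abelianization B) * Nat.card (Subgroup.center A) := by
      calc Nat.card (Abelianization ↥L) * Nat.card (Subgroup.center A)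
          = Nat.card (Abelianization ↥K) * Nat.card (Subgroup.center B) := hKL.symm
        _ ≤ Nat.card (Abelianization A) * Nat.card (Subgroup.center B) :=
            Nat.mul_le_mul_right _ (hA K)
        _ = Nat.card (Abelianization B) * Nat.card (Subgroup.center A) := hK₀
    have h2 : Nat.card (Abelianization ↥L) ≤ Nat.card (Abelianization B) :=
      Nat.le_of_mul_le_mul_right h1 cZApos
    exact le_trans (hHL H) h2
  · intro hA H hH
    by_cases hLtop : H ⊔ Subgroup.center B = ⊤
    · -- H' = B' , and |H| < |B|
      have e1 := aux_card_ab H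
      have eB := Subgroup.card_eq_card_quotient_mul_card_subgroup (commutator B)
      have hHB : (⁅H, H⁆ : Subgroup B) = commutator B := by
        rw [← aux_commutator_sup_center H, hLtop, commutator_def]
      have hcard : Nat.card ↥H < Nat.card B := by
        rcases lt_or_eq_of_le (Subgroup.card_le_card_group H) with h | h
        · exact h
        · exact absurd (Subgroup.eq_top_of_card_eq H h) hH
      have dpos : 0 < Nat.card ↥(⁅H, H⁆ : Subgroup B) := Nat.card_pos
      have : Nat.card (Abelianization ↥H) * Nat.card ↥(⁅H, H⁆ : Subgroup B) <
          Nat.card (Abelianization B) * Nat.card ↥(⁅H, H⁆ : Subgroup B) := by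
        rw [e1, hHB]
        rw [hHB] at e1
        calc Nat.card ↥H < Nat.card B := hcard
          _ = Nat.card (B ⧸ commutator B) * Nat.card (commutator B) := eB
          _ = Nat.card (Abelianization B) * Nat.card ↥(commutator B) := rfl
      exact Nat.lt_of_mul_lt_mul_right this
    · set L := H ⊔ Subgroup.center B with hLdef
      obtain ⟨K, hKtop, hKL⟩ := isoclinic_key φ ψ hc L le_sup_right
      have hKne : K ≠ ⊤ := fun hk => hLtop (hKtop.mp hk)
      have h1 : Nat.card (Abelianization ↥L) * Nat.card (Subgroup.center A) <
          Nat.card (Abelianization B) * Nat.card (Subgroup.center A) := by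
        calc Nat.card (Abelianization ↥L) * Nat.card (Subgroup.center A)
            = Nat.card (Abelianization ↥K) * Nat.card (Subgroup.center B) := hKL.symm
          _ < Nat.card (Abelianization A) * Nat.card (Subgroup.center B) :=
              (Nat.mul_lt_mul_right cZBpos).mpr (hA K hKne)
          _ = Nat.card (Abelianization B) * Nat.card (Subgroup.center A) := hK₀
      have h2 : Nat.card (Abelianization ↥L) < Nat.card (Abelianization B) :=
        Nat.lt_of_mul_lt_mul_right h1
      exact lt_of_le_of_lt (hHL H) h2
end

section
/- Suppose every finite weakly-top group W with Z(W) ≤ W' satisfies |W : W'| ≥ |W|^δ for some fixed δ > 0. Then every finite weakly-top group G satisfies |G : G'| ≥ |G|^{δ/(1+δ)}. -/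
open Subgroup
open scoped commutatorElement

universe u

section Abelianization

variable {H G : Type*} [Group H] [Group G]

theorem card_abelianization_mul_card_commutator (G : Type*) [Group G] :
    Nat.card (Abelianization G) * Nat.card (commutator G) = Nat.card G :=
  (commutator G).index_mul_card

theorem map_commutator_of_surjective {f : H →* G} (hf : Function.Surjective f) :
    (commutator H).map f = commutator G := by
  rw [map_commutator_eq, f.range_eq_top_of_surjective hf, commutator_def]

theorem card_abelianization_mul_card_ker {f : H →* G} (hf : Function.Surjective f) :
    Nat.card (Abelianization G) * Nat.card f.ker =
      Nat.card (Abelianization H) * Nat.card ↥(commutator H ⊓ f.ker) := by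
  have hindex : (commutator G).index = (commutator H ⊔ f.ker).index := by
    rw [← map_commutator_of_surjective hf, index_map, f.range_eq_top_of_surjective hf,
      index_top, mul_one]
  have hsup := relIndex_mul_index (le_sup_left : commutator H ≤ commutator H ⊔ f.ker)
  have hinf := relIndex_mul_relIndex ⊥ (commutator H ⊓ f.ker) f.ker bot_le inf_le_right
  rw [relIndex_sup_left] at hsup
  rw [relIndex_bot_left, relIndex_bot_left, inf_relIndex_right] at hinf
  change (commutator G).index * _ = (commutator H).index * _
  rw [hindex, ← hsup, ← hinf]
  ring

theorem card_abelianization_mul_card_ker_of_disjoint {f : H →* G}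
    (hf : Function.Surjective f) (hdisj : Disjoint (commutator H) f.ker) :
    Nat.card (Abelianization G) * Nat.card f.ker = Nat.card (Abelianization H) := by
  rw [card_abelianization_mul_card_ker hf, hdisj.eq_bot, card_bot, mul_one]

theorem card_abelianization_mul_card_eq_card_abelianization_comap {N : Subgroup H} [N.Normal]
    (hN : Disjoint (commutator H) N) (S : Subgroup (H ⧸ N)) :
    Nat.card (Abelianization S) * Nat.card N =
      Nat.card (Abelianization (S.comap (QuotientGroup.mk' N))) := by
  set T := S.comap (QuotientGroup.mk' N)
  have hNT : N ≤ T := fun x hx => by simp [T, (QuotientGroup.eq_one_iff x).2 hx]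
  set f := (QuotientGroup.mk' N).subgroupComap S
  have hker : f.ker = N.subgroupOf T := by
    ext x
    exact Subtype.ext_iff.trans (QuotientGroup.eq_one_iff _)
  have hdisj : Disjoint (commutator T) f.ker := by
    rw [hker, disjoint_iff_inf_le]
    rintro x ⟨hxc, hxN⟩
    have hxc' : (x : H) ∈ commutator H :=
      commutator_mono le_top le_top ((map_subtype_commutator T) ▸ mem_map_of_mem T.subtype hxc)
    exact Subtype.ext (disjoint_iff_inf_le.1 hN ⟨hxc', hxN⟩)
  rw [← card_abelianization_mul_card_ker_of_disjoint
    ((QuotientGroup.mk' N).subgroupComap_surjective_of_surjective S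
      (QuotientGroup.mk'_surjective N)) hdisj, hker,
    Nat.card_congr (subgroupOfEquivOfLe hNT).toEquiv]

theorem card_ker_comp_subtype_le [Finite H] (f : H →* G) (T : Subgroup H) :
    Nat.card (f.comp T.subtype).ker ≤ Nat.card f.ker :=
  Nat.card_le_card_of_injective (fun x => ⟨x.1, x.2⟩) fun _ _ h =>
    Subtype.ext (Subtype.ext congr(($h : H)))

theorem card_abelianization_le_card_ker_mul [Finite H] (f : H →* G) :
    Nat.card (Abelianization H) ≤ Nat.card f.ker * Nat.card (Abelianization f.range) := by
  have h := card_abelianization_mul_card_ker f.rangeRestrict_surjective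
  rw [MonoidHom.ker_rangeRestrict] at h
  calc Nat.card (Abelianization H)
      ≤ Nat.card (Abelianization H) * Nat.card ↥(commutator H ⊓ f.ker) :=
        Nat.le_mul_of_pos_right _ Nat.card_pos
    _ = Nat.card f.ker * Nat.card (Abelianization f.range) := by rw [← h, mul_comm]

end Abelianization

section AbelianExtension

variable {Z V : Type u} [CommGroup Z] [CommGroup V]

theorem MonoidHom.exists_factor_injective_mem_range [Finite V] (π : Z →* V) (v : V) :
    ∃ (Z' : Type u) (_ : CommGroup Z') (ι : Z →* Z') (π' : Z' →* V),
      Function.Injective ι ∧ π'.comp ι = π ∧ v ∈ π'.range ∧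
        π'.ker ≤ π.ker.map ι := by
  -- `Z' = (Z × ℤ) / ⟨(z₀⁻¹, n)⟩` adjoins to `Z` an `n`-th root of `z₀`, sent to `v`
  set n := orderOf (QuotientGroup.mk v : V ⧸ π.range)
  have hn : n ≠ 0 := (orderOf_pos _).ne'
  have hdvd : ∀ t : ℤ, v ^ t ∈ π.range ↔ (n : ℤ) ∣ t := fun t => by
    rw [orderOf_dvd_iff_zpow_eq_one, ← QuotientGroup.mk_zpow, QuotientGroup.eq_one_iff]
  obtain ⟨z₀, hz₀⟩ : v ^ (n : ℤ) ∈ π.range := (hdvd n).2 dvd_rfl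
  set κ : Z × Multiplicative ℤ := (z₀⁻¹, Multiplicative.ofAdd (n : ℤ))
  have hκ : ∀ m : ℤ, κ ^ m = (z₀ ^ (-m), Multiplicative.ofAdd (n * m)) := fun m => by
    ext <;> simp [κ, ← ofAdd_zsmul, mul_comm]
  set f : Z × Multiplicative ℤ →* V :=
    π.comp (MonoidHom.fst _ _) * (zpowersHom V v).comp (MonoidHom.snd _ _)
  have hf : ∀ z t, f (z, t) = π z * v ^ t.toAdd := fun _ _ => rfl
  have hκf : zpowers κ ≤ f.ker := by
    rw [zpowers_le, MonoidHom.mem_ker, hf, map_inv, hz₀, toAdd_ofAdd, inv_mul_cancel]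
  set ι : Z →* _ := (QuotientGroup.mk' (zpowers κ)).comp (MonoidHom.inl Z (Multiplicative ℤ))
  set π' := QuotientGroup.lift (zpowers κ) f hκf
  refine ⟨_, inferInstance, ι, π', ?_, ?_, ?_, ?_⟩
  · rw [injective_iff_map_eq_one]
    intro z hz
    obtain ⟨m, hm⟩ := mem_zpowers_iff.1 ((QuotientGroup.eq_one_iff _).1 hz)
    rw [hκ, Prod.ext_iff] at hm
    obtain ⟨rfl, hm⟩ := hm
    obtain rfl : m = 0 := by simpa [hn] using hm
    simp
  · ext z
    simp [π', ι, hf]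
  · exact ⟨QuotientGroup.mk (1, Multiplicative.ofAdd 1), by simp [π', hf]⟩
  · intro x hx
    induction x using QuotientGroup.induction_on with
    | H x =>
    obtain ⟨z, t⟩ := x
    have hzt : π z * v ^ t.toAdd = 1 := hx
    obtain ⟨m, hm⟩ :=
      (hdvd t.toAdd).1 ⟨z⁻¹, by rw [map_inv, eq_inv_of_mul_eq_one_right hzt]⟩
    refine ⟨z * z₀ ^ m, ?_, ?_⟩
    · change π (z * z₀ ^ m) = 1
      rw [map_mul, map_zpow, hz₀, ← zpow_mul, ← hm, hzt]
    · refine QuotientGroup.eq.2 (mem_zpowers_iff.2 ⟨m, ?_⟩)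
      rw [hκ, ← hm]
      ext <;> simp [zpow_neg]

theorem MonoidHom.exists_factor_injective_surjective [Finite Z] [Finite V] (π : Z →* V) :
    ∃ (E : Type u) (_ : CommGroup E) (_ : Finite E) (ι : Z →* E) (p : E →* V),
      Function.Injective ι ∧ Function.Surjective p ∧ p.comp ι = π ∧
        p.ker ≤ π.ker.map ι := by
  induction hk : π.range.index using Nat.strong_induction_on generalizing Z with
  | _ k ih =>
  by_cases hπ : Function.Surjective π
  · exact ⟨Z, inferInstance, inferInstance, MonoidHom.id Z, π, Function.injective_id, hπ,
      π.comp_id, by simp⟩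
  obtain ⟨v, hv⟩ : ∃ v, v ∉ π.range := by simpa [Function.Surjective] using hπ
  obtain ⟨Z', _, ι, π', hι, hcomp, hvπ', hker⟩ := π.exists_factor_injective_mem_range v
  have : Finite Z' := π'.finite_iff_finite_ker_range.2
    ⟨Set.Finite.to_subtype (((π.ker : Set Z).toFinite.image ι).subset hker), inferInstance⟩
  have hle : π.range ≤ π'.range := by
    rw [← hcomp, MonoidHom.range_comp]
    exact map_le_range _ _
  have hlt : π.range < π'.range := SetLike.lt_iff_le_and_exists.2 ⟨hle, v, hvπ', hv⟩
  obtain ⟨E, _, _, ι', p, hι', hp, hcomp', hker'⟩ :=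
    ih _ (hk ▸ index_strictAnti hlt) π' rfl
  refine ⟨E, inferInstance, inferInstance, ι'.comp ι, p, hι'.comp hι, hp, ?_, ?_⟩
  · rw [← MonoidHom.comp_assoc, hcomp', hcomp]
  · calc p.ker ≤ π'.ker.map ι' := hker'
      _ ≤ (π.ker.map ι).map ι' := map_mono hker
      _ = π.ker.map (ι'.comp ι) := map_map _ _ _

end AbelianExtension

theorem Subgroup.normal_of_le_center {G : Type*} [Group G] {H : Subgroup G}
    (h : H ≤ center G) : H.Normal :=
  ⟨fun n hn g => by rwa [mem_center_iff.1 (h hn) g, mul_inv_cancel_right]⟩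

section StemGroup

variable {G E : Type*} [Group G] [CommGroup E]

theorem snd_eq_one_of_mem_commutator {T : Subgroup (G × E)} {x : T}
    (hx : x ∈ commutator T) : (x : G × E).2 = 1 :=
  Abelianization.commutator_subset_ker ((MonoidHom.snd G E).comp T.subtype) hx

variable (p : E →* Abelianization G)

def fiberProduct : Subgroup (G × E) :=
  (Abelianization.of.comp (MonoidHom.fst G E)).eqLocus (p.comp (MonoidHom.snd G E))

def fiberProductFst : fiberProduct p →* G :=
  (MonoidHom.fst G E).comp (fiberProduct p).subtype

variable {p}

theorem mem_fiberProduct {x : G × E} : x ∈ fiberProduct p ↔ Abelianization.of x.1 = p x.2 :=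
  Iff.rfl

theorem fiberProductFst_surjective (hp : Function.Surjective p) :
    Function.Surjective (fiberProductFst p) := fun g =>
  have ⟨e, he⟩ := hp (Abelianization.of g)
  ⟨⟨(g, e), he.symm⟩, rfl⟩

theorem disjoint_commutator_ker_fiberProductFst :
    Disjoint (commutator (fiberProduct p)) (fiberProductFst p).ker := by
  rw [disjoint_iff_inf_le]
  rintro x ⟨hxc, hx⟩
  exact Subtype.ext (Prod.ext hx (snd_eq_one_of_mem_commutator hxc))

theorem card_ker_fiberProductFst_le [Finite E] :
    Nat.card (fiberProductFst p).ker ≤ Nat.card p.ker := by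
  refine Nat.card_le_card_of_injective
    (fun x => ⟨(x : G × E).2, ?_⟩) fun x y hxy => ?_
  · rw [MonoidHom.mem_ker, ← mem_fiberProduct.1 x.1.2, show (x : G × E).1 = 1 from x.2,
      map_one]
  · exact Subtype.ext <| Subtype.ext <| Prod.ext (x.2.trans y.2.symm) congr(($hxy).1)

theorem mem_commutator_of_snd_eq_one (hp : Function.Surjective p) {x : fiberProduct p}
    (hx₁ : (x : G × E).1 ∈ commutator G) (hx₂ : (x : G × E).2 = 1) :
    x ∈ commutator (fiberProduct p) := by
  rw [← map_commutator_of_surjective (fiberProductFst_surjective hp)] at hx₁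
  obtain ⟨y, hy, hyx⟩ := hx₁
  obtain rfl : y = x :=
    Subtype.ext (Prod.ext hyx ((snd_eq_one_of_mem_commutator hy).trans hx₂.symm))
  exact hy

variable {ι : center G →* E} (hι : p.comp ι = Abelianization.of.comp (center G).subtype)

def centerDiag : center G →* fiberProduct p :=
  ((center G).subtype.prod ι).codRestrict _ fun z => congr($hι z).symm

theorem centerDiag_injective : Function.Injective (centerDiag hι) := fun _ _ h =>
  Subtype.ext congr(($h : G × E).1)

theorem range_centerDiag_le_center : (centerDiag hι).range ≤ center (fiberProduct p) := by
  rintro _ ⟨z, rfl⟩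
  refine mem_center_iff.2 fun y => Subtype.ext (Prod.ext ?_ (mul_comm _ _))
  exact mem_center_iff.1 z.2 _

instance : (centerDiag hι).range.Normal := normal_of_le_center (range_centerDiag_le_center hι)

theorem eq_one_of_mem_range_centerDiag (hιinj : Function.Injective ι) {x : fiberProduct p}
    (hx : x ∈ (centerDiag hι).range) (hx₂ : (x : G × E).2 = 1) : x = 1 := by
  obtain ⟨z, rfl⟩ := hx
  obtain rfl : z = 1 := hιinj (hx₂.trans (map_one ι).symm)
  exact map_one _

theorem disjoint_commutator_range_centerDiag (hιinj : Function.Injective ι) :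
    Disjoint (commutator (fiberProduct p)) (centerDiag hι).range := by
  rw [disjoint_iff_inf_le]
  rintro x ⟨hxc, hx⟩
  exact eq_one_of_mem_range_centerDiag hι hιinj hx (snd_eq_one_of_mem_commutator hxc)

abbrev stemGroup : Type _ := fiberProduct p ⧸ (centerDiag hι).range

theorem card_abelianization_stemGroup_mul (hp : Function.Surjective p)
    (hιinj : Function.Injective ι) :
    Nat.card (Abelianization (stemGroup hι)) * Nat.card (center G) =
      Nat.card (Abelianization G) * Nat.card (fiberProductFst p).ker := by
  have hW := card_abelianization_mul_card_ker_of_disjoint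
    (QuotientGroup.mk'_surjective (centerDiag hι).range)
    (by rw [QuotientGroup.ker_mk']; exact disjoint_commutator_range_centerDiag hι hιinj)
  have hG := card_abelianization_mul_card_ker_of_disjoint (fiberProductFst_surjective hp)
    disjoint_commutator_ker_fiberProductFst
  rw [QuotientGroup.ker_mk'] at hW
  rw [← Nat.card_range_of_injective (centerDiag_injective hι)]
  exact hW.trans hG.symm

theorem fst_mem_center_of_mk_mem_center (hp : Function.Surjective p)
    (hιinj : Function.Injective ι) {x : fiberProduct p}
    (hx : (x : stemGroup hι) ∈ center (stemGroup hι)) : (x : G × E).1 ∈ center G := by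
  refine mem_center_iff.2 fun g => ?_
  obtain ⟨y, rfl⟩ := fiberProductFst_surjective hp g
  have hN : ⁅y, x⁆ ∈ (centerDiag hι).range := by
    rw [← QuotientGroup.eq_one_iff, ← QuotientGroup.mk'_apply, map_commutatorElement,
      commutatorElement_eq_one_iff_mul_comm]
    exact (mem_center_iff.1 hx _)
  have h := eq_one_of_mem_range_centerDiag hι hιinj hN
    (commutatorElement_eq_one_iff_mul_comm.2 (mul_comm _ _))
  exact congr(($(commutatorElement_eq_one_iff_mul_comm.1 h) : G × E).1)

theorem center_stemGroup_le_commutator (hp : Function.Surjective p)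
    (hιinj : Function.Injective ι)
    (hker : p.ker ≤ (Abelianization.of.comp (center G).subtype).ker.map ι) :
    center (stemGroup hι) ≤ commutator (stemGroup hι) := by
  intro w hw
  obtain ⟨x, rfl⟩ := QuotientGroup.mk_surjective w
  set g : center G := ⟨_, fst_mem_center_of_mk_mem_center hι hp hιinj hw⟩
  obtain ⟨z, hz, hze⟩ :
      (x : G × E).2 * (ι g)⁻¹ ∈ (Abelianization.of.comp (center G).subtype).ker.map ι := by
    have hιg : p (ι g) = Abelianization.of (g : G) := DFunLike.congr_fun hι g
    refine hker ?_
    rw [MonoidHom.mem_ker, map_mul, map_inv, ← mem_fiberProduct.1 x.2, hιg]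
    exact mul_inv_cancel _
  have hz' : (z : G)⁻¹ ∈ commutator G := by
    rw [← Abelianization.ker_of]
    exact inv_mem hz
  have hmem : ((z : G)⁻¹, (1 : E)) ∈ fiberProduct p := by
    change Abelianization.of (z : G)⁻¹ = p 1
    rw [map_one, ← MonoidHom.mem_ker, Abelianization.ker_of]
    exact hz'
  have hx : x = ⟨_, hmem⟩ * centerDiag hι (z * g) := by
    refine Subtype.ext (Prod.ext ?_ ?_)
    · exact (inv_mul_cancel_left (z : G) _).symm
    · change (x : G × E).2 = 1 * ι (z * g)
      rw [one_mul, map_mul, hze, inv_mul_cancel_right]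
  rw [hx, QuotientGroup.mk_mul, (QuotientGroup.eq_one_iff _).2 (MonoidHom.mem_range.2 ⟨_, rfl⟩),
    mul_one, ← map_commutator_of_surjective (QuotientGroup.mk'_surjective _)]
  exact mem_map_of_mem _ (mem_commutator_of_snd_eq_one hp hz' rfl)

variable [Finite G] [Finite E]

theorem card_ker_fiberProductFst_le_card_center (hιinj : Function.Injective ι)
    (hker : p.ker ≤ (Abelianization.of.comp (center G).subtype).ker.map ι) :
    Nat.card (fiberProductFst p).ker ≤ Nat.card (center G) :=
  calc Nat.card (fiberProductFst p).ker ≤ Nat.card p.ker := card_ker_fiberProductFst_le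
    _ ≤ Nat.card ((Abelianization.of.comp (center G).subtype).ker.map ι) := card_le_of_le hker
    _ ≤ Nat.card (center G) := by rw [card_map_of_injective hιinj]; exact card_le_card_group _

theorem card_abelianization_stemGroup_le (hp : Function.Surjective p)
    (hιinj : Function.Injective ι)
    (hker : p.ker ≤ (Abelianization.of.comp (center G).subtype).ker.map ι) :
    Nat.card (Abelianization (stemGroup hι)) ≤ Nat.card (Abelianization G) := by
  refine Nat.le_of_mul_le_mul_right ?_ (Nat.card_pos (α := center G))
  rw [card_abelianization_stemGroup_mul hι hp hιinj]
  exact Nat.mul_le_mul_left _ (card_ker_fiberProductFst_le_card_center hιinj hker)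

theorem card_commutator_le_card_stemGroup (hιinj : Function.Injective ι) :
    Nat.card (commutator G) ≤ Nat.card (stemGroup hι) := by
  have hmem (c : commutator G) : ((c : G), (1 : E)) ∈ fiberProduct p := by
    rw [mem_fiberProduct, map_one, ← MonoidHom.mem_ker, Abelianization.ker_of]
    exact c.2
  refine Nat.card_le_card_of_injective (fun c => QuotientGroup.mk ⟨_, hmem c⟩) fun c d hcd => ?_
  have h := eq_one_of_mem_range_centerDiag hι hιinj (QuotientGroup.eq.1 hcd) (by simp)
  exact Subtype.ext (inv_mul_eq_one.1 congr(($h : G × E).1))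

theorem isWeaklyTop_stemGroup (hp : Function.Surjective p) (hιinj : Function.Injective ι)
    (hG : IsWeaklyTop G) : IsWeaklyTop (stemGroup hι) := by
  intro S
  set T := S.comap (QuotientGroup.mk' (centerDiag hι).range)
  refine Nat.le_of_mul_le_mul_right ?_ (Nat.card_pos (α := center G))
  calc Nat.card (Abelianization S) * Nat.card (center G)
      = Nat.card (Abelianization T) := by
        rw [← Nat.card_range_of_injective (centerDiag_injective hι)]
        exact card_abelianization_mul_card_eq_card_abelianization_comap
          (disjoint_commutator_range_centerDiag hι hιinj) S
    _ ≤ Nat.card ((fiberProductFst p).comp T.subtype).ker *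
          Nat.card (Abelianization ((fiberProductFst p).comp T.subtype).range) :=
        card_abelianization_le_card_ker_mul _
    _ ≤ Nat.card (fiberProductFst p).ker * Nat.card (Abelianization G) :=
        Nat.mul_le_mul (card_ker_comp_subtype_le _ _) (hG _)
    _ = Nat.card (Abelianization (stemGroup hι)) * Nat.card (center G) := by
        rw [card_abelianization_stemGroup_mul hι hp hιinj, mul_comm]

end StemGroup

open scoped IsMulCommutative in
theorem exists_stem_isWeaklyTop {G : Type u} [Group G] [Finite G] (hG : IsWeaklyTop G) :
    ∃ (W : Type u) (_ : Group W) (_ : Finite W), center W ≤ commutator W ∧ IsWeaklyTop W ∧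
      Nat.card (commutator G) ≤ Nat.card W ∧
      Nat.card (Abelianization W) ≤ Nat.card (Abelianization G) := by
  obtain ⟨E, _, _, ι, p, hι, hp, hcomp, hker⟩ :=
    MonoidHom.exists_factor_injective_surjective (Abelianization.of.comp (center G).subtype)
  exact ⟨stemGroup hcomp, inferInstance, inferInstance,
    center_stemGroup_le_commutator hcomp hp hι hker, isWeaklyTop_stemGroup hcomp hp hι hG,
    card_commutator_le_card_stemGroup hcomp hι,
    card_abelianization_stemGroup_le hcomp hp hι hker⟩

theorem rpow_div_one_add_le_of_rpow_le {a d δ : ℝ} (ha : 0 ≤ a) (hd : 0 ≤ d) (hδ : 0 < δ)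
    (h : d ^ δ ≤ a) : (a * d) ^ (δ / (1 + δ)) ≤ a := by
  have hδ' : 0 < 1 + δ := by linarith
  calc (a * d) ^ (δ / (1 + δ)) = a ^ (δ / (1 + δ)) * (d ^ δ) ^ (1 / (1 + δ)) := by
        rw [Real.mul_rpow ha hd, ← Real.rpow_mul hd, mul_one_div]
    _ ≤ a ^ (δ / (1 + δ)) * a ^ (1 / (1 + δ)) := by gcongr
    _ = a := by
        rw [← Real.rpow_add' ha (by positivity), ← add_div, add_comm δ, div_self hδ'.ne',
          Real.rpow_one]

/-- If every finite weakly-top stem group `W` (i.e. with `Z(W) ≤ W'`) satisfies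
`|W : W'| ≥ |W|^δ`, then every finite weakly-top group `G` satisfies
`|G : G'| ≥ |G|^(δ/(1+δ))`. -/
theorem weakly_top_abelianization_bound (δ : ℝ) (hδ : 0 < δ)
    (hstem : ∀ (W : Type) [Group W] [Finite W],
      Subgroup.center W ≤ commutator W → IsWeaklyTop W →
      (Nat.card W : ℝ) ^ δ ≤ (Nat.card (Abelianization W) : ℝ)) :
    ∀ (G : Type) [Group G] [Finite G], IsWeaklyTop G →
      (Nat.card G : ℝ) ^ (δ / (1 + δ)) ≤ (Nat.card (Abelianization G) : ℝ) := by
  intro G _ _ hG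
  obtain ⟨W, _, _, hWstem, hW, hcard, hab⟩ := exists_stem_isWeaklyTop hG
  have hd : (Nat.card (commutator G) : ℝ) ^ δ ≤ Nat.card (Abelianization G) :=
    calc (Nat.card (commutator G) : ℝ) ^ δ ≤ (Nat.card W : ℝ) ^ δ := by gcongr
      _ ≤ Nat.card (Abelianization W) := hstem W hWstem hW
      _ ≤ Nat.card (Abelianization G) := by exact_mod_cast hab
  rw [← card_abelianization_mul_card_commutator G, Nat.cast_mul]
  exact rpow_div_one_add_le_of_rpow_le (Nat.cast_nonneg _) (Nat.cast_nonneg _) hδ hd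
end
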